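/- arXiv:2507.02161 — 5 statements merged into one kernel-verified Lean document; each statement's English description precedes it below -/
import Mathlib

section
/- Let G be a connected graph on vertex set [n] and let A be a subset of [n] such that the induced subgraph on [n]\A has connected components with vertex sets W_1,...,W_k where k ≥ 2. Then there exists a subset B ⊆ A such that every vertex of B is a cut point of the graph induced on ([n]\B) ∪ {that vertex} (i.e., B is a minimal k'-cut for some k' ≥ 2), and each W_i remains entirely contained within a distinct connected component of the induced subgraph on [n]\B. -/
open MvPolynomial

variable {n : ℕ}

/-- Number of connected components of the subgraph of `G` induced on `T`. -/
noncomputable def numComp (G : SimpleGraph (Fin n)) (T : Set (Fin n)) : ℕ :=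
  Nat.card (G.induce T).ConnectedComponent

/-- `a` and `b` lie in the same connected component of the subgraph induced on `T`. -/
def SameComp (G : SimpleGraph (Fin n)) (T : Set (Fin n)) (a b : Fin n) : Prop :=
  ∃ (ha : a ∈ T) (hb : b ∈ T), (G.induce T).Reachable ⟨a, ha⟩ ⟨b, hb⟩

/-- `S` is a minimal `k`-cut of `G`. -/
def IsMinKCut (G : SimpleGraph (Fin n)) (S : Set (Fin n)) (k : ℕ) : Prop :=
  S.Nonempty ∧ S ≠ Set.univ ∧ numComp G Sᶜ = k ∧
    ∀ i ∈ S, numComp G (Sᶜ ∪ {i}) < numComp G Sᶜ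

/-- The collection `min(G)`: all minimal `k`-cuts (`k ≥ 2`) together with `∅`. -/
def minSet (G : SimpleGraph (Fin n)) : Set (Set (Fin n)) :=
  {S | S = ∅ ∨ ∃ k, 2 ≤ k ∧ IsMinKCut G S k}

/-- `A` is a connected dominating set of the subgraph of `G` induced on `T`. -/
def ConnDom (G : SimpleGraph (Fin n)) (T A : Set (Fin n)) : Prop :=
  A ⊆ T ∧ (G.induce A).Connected ∧ ∀ v ∈ T, v ∉ A → ∃ a ∈ A, G.Adj v a

/-- The polynomial ring `K[x_1,…,x_n,y_1,…,y_n]` over `ℂ`. -/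
abbrev PolyRing (n : ℕ) := MvPolynomial (Fin n ⊕ Fin n) ℂ

/-- The binomial `f_{i,j} = x_i y_j − x_j y_i`. -/
noncomputable def fij (i j : Fin n) : PolyRing n :=
  X (Sum.inl i) * X (Sum.inr j) - X (Sum.inl j) * X (Sum.inr i)

/-- The binomial edge ideal of a graph. -/
noncomputable def beIdeal (G : SimpleGraph (Fin n)) : Ideal (PolyRing n) :=
  Ideal.span {g | ∃ i j, G.Adj i j ∧ g = fij i j}

/-- Localized v-number of `I` at `p`. -/
noncomputable def vAt (I p : Ideal (PolyRing n)) : ℕ :=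
  sInf {d | ∃ f : PolyRing n, f.IsHomogeneous d ∧ Submodule.colon I (Ideal.span {f}) = p}

/-- v-number of `I`. -/
noncomputable def vNum (I : Ideal (PolyRing n)) : ℕ :=
  sInf {d | ∃ f : PolyRing n, f.IsHomogeneous d ∧ (Submodule.colon I (Ideal.span {f})).IsPrime}

/-- The graph which is the disjoint union of complete graphs on the connected
components of the subgraph of `G` induced on `Sᶜ`. -/
def tildeG (G : SimpleGraph (Fin n)) (S : Set (Fin n)) : SimpleGraph (Fin n) :=
  SimpleGraph.fromRel (fun a b => SameComp G Sᶜ a b)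

/-- The minimal prime `P_S` of the binomial edge ideal. -/
noncomputable def primePS (G : SimpleGraph (Fin n)) (S : Set (Fin n)) : Ideal (PolyRing n) :=
  Ideal.span (({g | ∃ i ∈ S, g = X (Sum.inl i)} ∪ {g | ∃ i ∈ S, g = X (Sum.inr i)} : Set (PolyRing n)))
    ⊔ beIdeal (tildeG G S)

/-- `B` is a dependent set of the rank-≤2 matroid `M(S)`. -/
def depM (G : SimpleGraph (Fin n)) (S : Set (Fin n)) (B : Set (Fin n)) : Prop :=
  (B ∩ S).Nonempty ∨ (∃ a b, a ∈ B ∧ b ∈ B ∧ a ≠ b ∧ SameComp G Sᶜ a b) ∨ 3 ≤ B.ncard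

/-- `A` is a transversal of `{D(M(S'))\D(M(S)) : S' ∈ min(G)\{S}}` consisting of
singletons and pairs outside `D(M(S))`. -/
def IsTransversal (G : SimpleGraph (Fin n)) (S : Set (Fin n))
    (A : Finset (Finset (Fin n))) : Prop :=
  (∀ e ∈ A, e.card = 1 ∨ e.card = 2) ∧ (∀ e ∈ A, ¬ depM G S ↑e) ∧
    ∀ S' ∈ minSet G, S' ≠ S → ∃ e ∈ A, depM G S' ↑e

/-- The singletons of `A`, viewed as a subset of `[n]`. -/
def A1set (A : Finset (Finset (Fin n))) : Finset (Fin n) :=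
  (A.filter fun e => e.card = 1).biUnion id

/-- The pairs of `A`. -/
def A2set (A : Finset (Finset (Fin n))) : Finset (Finset (Fin n)) :=
  A.filter fun e => e.card = 2

/-- The binomial attached to an unordered pair. -/
noncomputable def fPair (e : Finset (Fin n)) : PolyRing n :=
  if h : e.Nonempty then fij (e.min' h) (e.max' h) else 1

/-- The generator `g_{A,C,D}`. -/
noncomputable def gPoly (A : Finset (Finset (Fin n))) (C D : Finset (Fin n)) : PolyRing n :=
  (∏ k ∈ C, X (Sum.inl k)) * (∏ k ∈ D, X (Sum.inr k)) * ∏ e ∈ A2set A, fPair e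

/-- The cycle graph on `[n]`. -/
def cycG (n : ℕ) [NeZero n] : SimpleGraph (Fin n) :=
  SimpleGraph.fromRel (fun i j => j = i + 1)

/-- The connected domination number of `G`. -/
noncomputable def gammaC (G : SimpleGraph (Fin n)) : ℕ :=
  sInf {k | ∃ A : Set (Fin n), ConnDom G Set.univ A ∧ A.ncard = k}

/-- `S'` is nice with respect to the components `V1`, `V2`. -/
def Nice (G : SimpleGraph (Fin n)) (V1 V2 S' : Set (Fin n)) : Prop :=
  ¬ ∃ i j, i ∈ V1 \ S' ∧ j ∈ V2 \ S' ∧ SameComp G S'ᶜ i j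

/-- `V1`, `V2` are the vertex sets of the two connected components of the
subgraph induced on `Sᶜ`. -/
def ComponentsOf (G : SimpleGraph (Fin n)) (S V1 V2 : Set (Fin n)) : Prop :=
  V1 ∪ V2 = Sᶜ ∧ Disjoint V1 V2 ∧ V1.Nonempty ∧ V2.Nonempty ∧
    (∀ a ∈ V1, ∀ b ∈ V1, SameComp G Sᶜ a b) ∧
    (∀ a ∈ V2, ∀ b ∈ V2, SameComp G Sᶜ a b) ∧
    ∀ a ∈ V1, ∀ b ∈ V2, ¬ SameComp G Sᶜ a b

/-- Significance index of a variable: `x_1 > ⋯ > x_n > y_1 > ⋯ > y_n`. -/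
def sigIdx (n : ℕ) : Fin n ⊕ Fin n → ℕ := Sum.elim (fun i => (i : ℕ)) (fun i => n + i)

/-- Lexicographic comparison of exponent vectors. -/
def lexLt (n : ℕ) (a b : (Fin n ⊕ Fin n) →₀ ℕ) : Prop :=
  ∃ v, a v < b v ∧ ∀ w, sigIdx n w < sigIdx n v → a w = b w

/-- `m` is the leading (lex-largest) exponent of `f`. -/
def IsLeadExp (n : ℕ) (f : PolyRing n) (m : (Fin n ⊕ Fin n) →₀ ℕ) : Prop :=
  m ∈ f.support ∧ ∀ m' ∈ f.support, m' ≠ m → lexLt n m' m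

/-- The initial ideal of `I` with respect to the lexicographic order. -/
noncomputable def inIdeal (I : Ideal (PolyRing n)) : Ideal (PolyRing n) :=
  Ideal.span {g | ∃ f ∈ I, ∃ m, IsLeadExp n f m ∧ g = monomial m 1}

/-- A permutation `σ` of `[n]` is `S`-consistent (for `S` an independent set of
the cycle `C_n`). -/
def SConsistent (n : ℕ) [NeZero n] (S : Set (Fin n)) (σ : Equiv.Perm (Fin n)) : Prop :=
  (∀ x : Fin n, x ∉ S → x + 1 ∈ S →
    ((σ x < σ (x + 2) → x + 3 ∉ S → σ (x + 2) < σ (x + 3)) ∧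
     (σ x < σ (x + 2) → x - 1 ∉ S → σ (x - 1) < σ x) ∧
     (σ (x + 2) < σ x → x + 3 ∉ S → σ (x + 3) < σ (x + 2)) ∧
     (σ (x + 2) < σ x → x - 1 ∉ S → σ x < σ (x - 1)))) ∧
  (∀ y : Fin n, y - 1 ∉ S → y ∉ S → y + 1 ∉ S → (σ (y - 1) < σ y ↔ σ y < σ (y + 1)))

section Stmt0Aux

open SimpleGraph

def inclHom (G : SimpleGraph (Fin n)) {T T' : Set (Fin n)} (h : T ⊆ T') :
    G.induce T →g G.induce T' where
  toFun x := ⟨x.1, h x.2⟩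
  map_rel' := fun ha => ha

lemma sameComp_mono {G : SimpleGraph (Fin n)} {T T' : Set (Fin n)} (h : T ⊆ T')
    {a b : Fin n} (hab : SameComp G T a b) : SameComp G T' a b := by
  obtain ⟨ha, hb, hr⟩ := hab
  exact ⟨h ha, h hb, hr.map (inclHom G h)⟩

instance (G : SimpleGraph (Fin n)) (T : Set (Fin n)) :
    Finite (G.induce T).ConnectedComponent :=
  Finite.of_surjective _ (Quot.exists_rep)

lemma two_le_numComp {G : SimpleGraph (Fin n)} {T : Set (Fin n)} {a b : Fin n}
    (ha : a ∈ T) (hb : b ∈ T) (hab : ¬ SameComp G T a b) : 2 ≤ numComp G T := by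
  have hne : (G.induce T).connectedComponentMk ⟨a, ha⟩ ≠
      (G.induce T).connectedComponentMk ⟨b, hb⟩ := by
    intro h
    exact hab ⟨ha, hb, ConnectedComponent.eq.1 h⟩
  exact Finite.one_lt_card_iff_nontrivial.2 ⟨_, _, hne⟩

lemma exists_not_sameComp {G : SimpleGraph (Fin n)} {T : Set (Fin n)}
    (h : 2 ≤ numComp G T) : ∃ a b, a ∈ T ∧ b ∈ T ∧ ¬ SameComp G T a b := by
  obtain ⟨c, d, hcd⟩ := Finite.one_lt_card_iff_nontrivial.1 h
  obtain ⟨u, rfl⟩ := c.exists_rep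
  obtain ⟨v, rfl⟩ := d.exists_rep
  refine ⟨u.1, v.1, u.2, v.2, ?_⟩
  rintro ⟨ha, hb, hr⟩
  exact hcd (ConnectedComponent.eq.2 hr)

lemma mem_of_ne {T : Set (Fin n)} {i : Fin n} (x : ↑(T ∪ {i}))
    (hx : (x : Fin n) ≠ i) : (x : Fin n) ∈ T :=
  x.2.resolve_right (by simpa using hx)

lemma reach_of_walk_avoid {G : SimpleGraph (Fin n)} {T : Set (Fin n)} {i : Fin n}
    {u v : ↑(T ∪ {i})} (w : (G.induce (T ∪ {i})).Walk u v)
    (hw : ∀ x ∈ w.support, (x : Fin n) ≠ i) :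
    ∃ (hu : (u : Fin n) ∈ T) (hv : (v : Fin n) ∈ T),
      (G.induce T).Reachable ⟨u, hu⟩ ⟨v, hv⟩ := by
  induction w with
  | nil =>
    have hu := mem_of_ne _ (hw _ (SimpleGraph.Walk.start_mem_support _))
    exact ⟨hu, hu, Reachable.refl _⟩
  | @cons p q r hadj tail ih =>
    have hp : (p : Fin n) ∈ T := mem_of_ne _ (hw _ (SimpleGraph.Walk.start_mem_support _))
    obtain ⟨hq, hr, hreach⟩ := ih (fun x hx => hw x (by simp [hx]))
    refine ⟨hp, hr, Reachable.trans ?_ hreach⟩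
    exact Adj.reachable (by exact hadj : G.Adj (p : Fin n) (q : Fin n))

lemma numComp_insert_lt {G : SimpleGraph (Fin n)} {T : Set (Fin n)} {i a b : Fin n}
    (ha : a ∈ T) (hb : b ∈ T) (hab : ¬ SameComp G T a b)
    (hab' : SameComp G (T ∪ {i}) a b) :
    numComp G (T ∪ {i}) < numComp G T := by
  classical
  set ψ : (G.induce T).ConnectedComponent → (G.induce (T ∪ {i})).ConnectedComponent :=
    fun c => c.map (inclHom G Set.subset_union_left) with hψ
  obtain ⟨ha', hb', hr⟩ := hab'
  have hsurj : Function.Surjective ψ := by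
    intro c
    obtain ⟨v, rfl⟩ := c.exists_rep
    by_cases hvi : (v : Fin n) = i
    · obtain ⟨w⟩ := hr
      by_cases hws : ∀ x ∈ w.support, (x : Fin n) ≠ i
      · obtain ⟨hu, hv, hr'⟩ := reach_of_walk_avoid w hws
        exact absurd ⟨hu, hv, hr'⟩ hab
      · push_neg at hws
        obtain ⟨x, hxs, hxi⟩ := hws
        have hx : x = v := Subtype.ext (hxi.trans hvi.symm)
        refine ⟨(G.induce T).connectedComponentMk ⟨a, ha⟩, ?_⟩
        have hre : (G.induce (T ∪ {i})).Reachable ⟨a, ha'⟩ v := by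
          rw [← hx]; exact ⟨w.takeUntil x hxs⟩
        show (G.induce (T ∪ {i})).connectedComponentMk ⟨a, ha'⟩ =
          (G.induce (T ∪ {i})).connectedComponentMk v
        exact ConnectedComponent.eq.2 hre
    · exact ⟨(G.induce T).connectedComponentMk ⟨v.1, mem_of_ne v hvi⟩, rfl⟩
  have hninj : ¬ Function.Injective ψ := by
    intro hinj
    have h1 : ψ ((G.induce T).connectedComponentMk ⟨a, ha⟩) =
        ψ ((G.induce T).connectedComponentMk ⟨b, hb⟩) := by
      show (G.induce (T ∪ {i})).connectedComponentMk ⟨a, ha'⟩ =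
        (G.induce (T ∪ {i})).connectedComponentMk ⟨b, hb'⟩
      exact ConnectedComponent.eq.2 hr
    exact hab ⟨ha, hb, ConnectedComponent.eq.1 (hinj h1)⟩
  letI := Fintype.ofFinite (G.induce T).ConnectedComponent
  letI := Fintype.ofFinite (G.induce (T ∪ {i})).ConnectedComponent
  have := Fintype.card_lt_of_surjective_not_injective ψ hsurj hninj
  simpa [numComp, Nat.card_eq_fintype_card] using this

lemma numComp_univ {G : SimpleGraph (Fin n)} (hG : G.Connected) :
    numComp G Set.univ = 1 := by
  rw [numComp, Nat.card_eq_one_iff_unique]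
  constructor
  · constructor
    intro c d
    obtain ⟨u, rfl⟩ := c.exists_rep
    obtain ⟨v, rfl⟩ := d.exists_rep
    refine ConnectedComponent.eq.2 ?_
    let homU : G →g G.induce Set.univ := ⟨fun x => ⟨x, trivial⟩, fun h => h⟩
    exact (hG.preconnected u.1 v.1).map homU
  · obtain ⟨v⟩ := hG.nonempty
    exact ⟨(G.induce Set.univ).connectedComponentMk ⟨v, trivial⟩⟩

lemma stmt0_aux (G : SimpleGraph (Fin n)) (hG : G.Connected) :
    ∀ m (A : Set (Fin n)), A.ncard ≤ m → 2 ≤ numComp G Aᶜ →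
    ∃ B ⊆ A, (∃ k, 2 ≤ k ∧ IsMinKCut G B k) ∧
      ∀ a b : Fin n, a ∈ Aᶜ → b ∈ Aᶜ → SameComp G Bᶜ a b → SameComp G Aᶜ a b := by
  intro m
  induction m with
  | zero =>
    intro A hm hA
    have hAe : A = ∅ := (Set.ncard_eq_zero (Set.toFinite A)).1 (Nat.le_zero.1 hm)
    exact absurd hA (by simp [hAe, Set.compl_empty, numComp_univ hG])
  | succ m ih =>
    intro A hm hA
    by_cases h : ∀ i ∈ A, numComp G (Aᶜ ∪ {i}) < numComp G Aᶜ
    · have hne : A.Nonempty := by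
        rcases Set.eq_empty_or_nonempty A with rfl | hne
        · exact absurd hA (by simp [Set.compl_empty, numComp_univ hG])
        · exact hne
      have hnu : A ≠ Set.univ := by
        rintro rfl
        rw [Set.compl_univ] at hA
        have : IsEmpty (G.induce (∅ : Set (Fin n))).ConnectedComponent := by
          constructor
          intro c
          obtain ⟨v, _⟩ := c.exists_rep
          exact Set.notMem_empty _ v.2
        rw [numComp, Nat.card_of_isEmpty] at hA
        omega
      exact ⟨A, subset_rfl, ⟨numComp G Aᶜ, hA, hne, hnu, rfl, h⟩,
        fun a b _ _ hr => hr⟩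
    · push_neg at h
      obtain ⟨i, hiA, hi⟩ := h
      have hsep : ∀ a b, a ∈ Aᶜ → b ∈ Aᶜ → SameComp G (Aᶜ ∪ {i}) a b → SameComp G Aᶜ a b := by
        intro a b ha hb hab
        by_contra hcon
        exact absurd (numComp_insert_lt ha hb hcon hab) (not_lt.2 hi)
      have hcompl : (A \ {i})ᶜ = Aᶜ ∪ {i} := by
        rw [Set.diff_eq, Set.compl_inter, compl_compl]
      obtain ⟨a, b, ha, hb, hab⟩ := exists_not_sameComp hA
      have h2 : 2 ≤ numComp G (A \ {i})ᶜ := by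
        rw [hcompl]
        refine two_le_numComp (Set.mem_union_left _ ha) (Set.mem_union_left _ hb) ?_
        intro hc
        exact hab (hsep a b ha hb hc)
      have hcard : (A \ {i}).ncard ≤ m := by
        have h1 := Set.ncard_diff_singleton_lt_of_mem hiA (Set.toFinite A)
        omega
      obtain ⟨B, hBA, hcut, hsepB⟩ := ih (A \ {i}) hcard h2
      refine ⟨B, hBA.trans Set.diff_subset, hcut, ?_⟩
      intro c d hc hd hr
      have hc' : c ∈ (A \ {i})ᶜ := by rw [hcompl]; exact Set.mem_union_left _ hc
      have hd' : d ∈ (A \ {i})ᶜ := by rw [hcompl]; exact Set.mem_union_left _ hd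
      have := hsepB c d hc' hd' hr
      rw [hcompl] at this
      exact hsep c d hc hd this

end Stmt0Aux

/-- refinement of a cut to a minimal k-cut keeping components separated. -/
theorem stmt0 {n : ℕ} (G : SimpleGraph (Fin n)) (hG : G.Connected)
    (A : Set (Fin n)) (hA : 2 ≤ numComp G Aᶜ) :
    ∃ B ⊆ A, (∃ k, 2 ≤ k ∧ IsMinKCut G B k) ∧
      ∀ a b : Fin n, a ∈ Aᶜ → b ∈ Aᶜ → SameComp G Bᶜ a b → SameComp G Aᶜ a b := by
  exact stmt0_aux G hG A.ncard A le_rfl hA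
end

section
/- Let G be a connected graph on [n], let S be a minimal cut of G (a minimal 2-cut), and let V_1, V_2 be the vertex sets of the two connected components of the induced subgraph on [n]\S. Let B ⊆ [n]\S be a subset with B ∩ V_1 ≠ ∅ and B ∩ V_2 ≠ ∅. Then B intersects every set S'\S, where S' ranges over all nice minimal k-cuts of G different from S, if and only if for each i = 1,2 the set B ∩ V_i is a connected dominating set of the induced subgraph G_{V_i ∪ S}. -/
/-!
If `B ∩ V1` and `B ∩ V2` are connected dominating sets, a nice cut `S' ≠ S` missing `B` must
contain `S` (a vertex of `S \ S'` would join `B ∩ V1` to `B ∩ V2`), and then a vertex of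
`S' \ S` has all its neighbours outside `S'` in a single component of `G[S'ᶜ]`, against
minimality.

Conversely, a failure of connectivity or domination of `B ∩ V1` yields a set
`S' ⊆ (V1 \ B) ∪ S` whose complement splits into the block `V2 ∪ (S \ S')` and pieces of
`V1`, with `S' ≠ S`. Removing from `S'` a vertex that meets only one component of `G[S'ᶜ]`
(and, for a vertex of `V1`, adding its neighbours in `S` to keep the splitting) terminates in a
nice minimal cut `S' ≠ S` missing `B`.
-/

open MvPolynomial

variable {n : ℕ}

open SimpleGraph

def JoinsComps (G : SimpleGraph (Fin n)) (T : Set (Fin n)) (i : Fin n) : Prop :=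
  ∃ x ∈ T, ∃ y ∈ T, G.Adj i x ∧ G.Adj i y ∧ ¬ SameComp G T x y

namespace SameComp

variable {G : SimpleGraph (Fin n)} {T U A : Set (Fin n)} {a b c s : Fin n}

theorem refl (ha : a ∈ T) : SameComp G T a a := ⟨ha, ha, .refl _⟩

theorem symm (h : SameComp G T a b) : SameComp G T b a :=
  let ⟨ha, hb, r⟩ := h; ⟨hb, ha, r.symm⟩

theorem trans (h : SameComp G T a b) (h' : SameComp G T b c) : SameComp G T a c :=
  let ⟨ha, _, r⟩ := h; let ⟨_, hc, r'⟩ := h'; ⟨ha, hc, r.trans r'⟩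

theorem of_adj (ha : a ∈ T) (hb : b ∈ T) (hab : G.Adj a b) : SameComp G T a b :=
  ⟨ha, hb, Adj.reachable (G := G.induce T) hab⟩

theorem mono (hTU : T ⊆ U) (h : SameComp G T a b) : SameComp G U a b :=
  let ⟨ha, hb, r⟩ := h; ⟨hTU ha, hTU hb, r.map (G.induceHomOfLE hTU).toHom⟩

theorem iff_exists_walk : SameComp G T a b ↔ ∃ w : G.Walk a b, ∀ v ∈ w.support, v ∈ T := by
  constructor
  · rintro ⟨ha, hb, ⟨w⟩⟩
    refine ⟨w.map (Embedding.induce T).toHom, fun v hv => ?_⟩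
    obtain ⟨x, -, rfl⟩ := List.mem_map.1 ((w.support_map _) ▸ hv)
    exact x.2
  · rintro ⟨w, hw⟩
    exact ⟨_, _, ⟨w.induce T hw⟩⟩

theorem of_closed (hA : ∀ x ∈ A, ∀ y ∈ T, G.Adj x y → y ∈ A) (ha : a ∈ A)
    (h : SameComp G T a b) : SameComp G A a b := by
  obtain ⟨w, hw⟩ := iff_exists_walk.1 h
  refine iff_exists_walk.2 ⟨w, ?_⟩
  clear h
  induction w with
  | nil => simpa using ha
  | cons hadj w ih =>
    simp only [Walk.support_cons, List.mem_cons, forall_eq_or_imp] at hw ⊢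
    exact ⟨ha, ih (hA _ ha _ (hw.2 _ w.start_mem_support) hadj) hw.2⟩

theorem eq_of_forall_not_adj (hv : ∀ y ∈ T, ¬ G.Adj a y) (h : SameComp G T a b) : b = a := by
  have hclosed : ∀ x ∈ ({a} : Set (Fin n)), ∀ y ∈ T, G.Adj x y → y ∈ ({a} : Set (Fin n)) := by
    rintro x rfl y hy hxy
    exact absurd hxy (hv y hy)
  exact (of_closed hclosed rfl h).2.1

theorem of_union_singleton (hs : s ∉ T) (hjoin : ¬ JoinsComps G T s) (ha : a ∈ T)
    (hb : b ∈ T) (h : SameComp G (T ∪ {s}) a b) : SameComp G T a b := by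
  obtain ⟨w, hw⟩ := iff_exists_walk.1 h
  clear h
  suffices (a ∈ T → SameComp G T a b) ∧ (a = s → ∀ x ∈ T, G.Adj s x → SameComp G T x b) from
    this.1 ha
  clear ha
  induction w with
  | nil => exact ⟨refl, fun has => absurd (has ▸ hb) hs⟩
  | @cons u v _ huv w ih =>
    simp only [Walk.support_cons, List.mem_cons, forall_eq_or_imp] at hw
    have hv : v ∈ T ∨ v = s := hw.2 v w.start_mem_support
    obtain ⟨ihT, ihs⟩ := ih hb hw.2
    refine ⟨fun hu => ?_, fun hus x hx hsx => ?_⟩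
    · rcases hv with hv | rfl
      · exact (of_adj hu hv huv).trans (ihT hv)
      · exact ihs rfl u hu huv.symm
    · subst hus
      have hvT : v ∈ T := hv.resolve_right (G.ne_of_adj huv).symm
      have hxv : SameComp G T x v :=
        not_not.1 fun hxv => hjoin ⟨x, hx, v, hvT, hsx, huv, hxv⟩
      exact hxv.trans (ihT hvT)

end SameComp

section Components

variable {G : SimpleGraph (Fin n)} {T A S' : Set (Fin n)} {a x i : Fin n}

theorem numComp_union_singleton_lt_iff (hi : i ∉ T) :
    numComp G (T ∪ {i}) < numComp G T ↔ JoinsComps G T i := by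
  classical
  let f := ConnectedComponent.map (G.induceHomOfLE (Set.subset_union_left : T ⊆ T ∪ {i})).toHom
  have hf : ∀ x y : T, f (connectedComponentMk _ x) = f (connectedComponentMk _ y) ↔
      SameComp G (T ∪ {i}) x y := fun x y =>
    ConnectedComponent.eq.trans ⟨fun r => ⟨_, _, r⟩, fun ⟨_, _, r⟩ => r⟩
  have : Fintype (G.induce T).ConnectedComponent := Fintype.ofFinite _
  have : Fintype (G.induce (T ∪ {i})).ConnectedComponent := Fintype.ofFinite _
  simp only [numComp, Nat.card_eq_fintype_card]
  constructor
  · intro hlt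
    by_contra hjoin
    refine hlt.not_ge (Fintype.card_le_of_injective f fun C D hCD => ?_)
    induction C using ConnectedComponent.ind with | _ x =>
    induction D using ConnectedComponent.ind with | _ y =>
    exact ConnectedComponent.sound
      (SameComp.of_union_singleton hi hjoin x.2 y.2 ((hf x y).1 hCD)).2.2
  · rintro ⟨x, hx, y, hy, hix, hiy, hxy⟩
    refine Fintype.card_lt_of_surjective_not_injective f (fun C => ?_) fun hinj => hxy ?_
    · induction C using ConnectedComponent.ind with | _ v =>
      rcases v with ⟨v, hv | rfl⟩
      · exact ⟨connectedComponentMk _ ⟨v, hv⟩, rfl⟩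
      · refine ⟨connectedComponentMk _ ⟨x, hx⟩, ConnectedComponent.sound ?_⟩
        exact Adj.reachable (G := G.induce (T ∪ {v})) hix.symm
    · have hxy' : SameComp G (T ∪ {i}) x y :=
        (SameComp.of_adj (.inl hx) (.inr rfl) hix.symm).trans (.of_adj (.inr rfl) (.inl hy) hiy)
      exact ⟨hx, hy, ConnectedComponent.eq.1 (hinj ((hf ⟨x, hx⟩ ⟨y, hy⟩).2 hxy'))⟩

theorem two_le_numComp_of_joinsComps (h : JoinsComps G T i) : 2 ≤ numComp G T := by
  obtain ⟨x, hx, y, hy, -, -, hxy⟩ := h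
  have : Fintype (G.induce T).ConnectedComponent := Fintype.ofFinite _
  have hne : connectedComponentMk (G.induce T) ⟨x, hx⟩ ≠ connectedComponentMk _ ⟨y, hy⟩ :=
    fun h => hxy ⟨hx, hy, ConnectedComponent.eq.1 h⟩
  simp only [numComp, Nat.card_eq_fintype_card]
  exact Fintype.one_lt_card_iff_nontrivial.2 ⟨_, _, hne⟩

theorem isMinKCut_iff {S : Set (Fin n)} {k : ℕ} : IsMinKCut G S k ↔
    S.Nonempty ∧ S ≠ Set.univ ∧ numComp G Sᶜ = k ∧ ∀ i ∈ S, JoinsComps G Sᶜ i := by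
  refine and_congr_right' (and_congr_right' (and_congr_right' (forall₂_congr fun i hi => ?_)))
  exact numComp_union_singleton_lt_iff (Set.notMem_compl_iff.2 hi)

theorem induce_connected_iff_sameComp :
    (G.induce A).Connected ↔ A.Nonempty ∧ ∀ a ∈ A, ∀ b ∈ A, SameComp G A a b := by
  rw [connected_iff, Set.nonempty_coe_sort, and_comm]
  refine and_congr_right' ⟨fun h a ha b hb => ⟨ha, hb, h _ _⟩, fun h a b => ?_⟩
  exact (h a a.2 b b.2).2.2

theorem ConnDom.sameComp {D : Set (Fin n)} (hD : ConnDom G T D) (hDS : Disjoint D S')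
    (ha : a ∈ D) (hx : x ∈ T) (hxS : x ∉ S') : SameComp G S'ᶜ x a := by
  have hDc : D ⊆ S'ᶜ := hDS.subset_compl_right
  have hconn := (induce_connected_iff_sameComp.1 hD.2.1).2
  by_cases hxD : x ∈ D
  · exact (hconn x hxD a ha).mono hDc
  · obtain ⟨d, hd, hxd⟩ := hD.2.2 x hx hxD
    exact (SameComp.of_adj hxS (hDc hd) hxd).trans ((hconn d hd a ha).mono hDc)

end Components

theorem Nice.symm {G : SimpleGraph (Fin n)} {V1 V2 S' : Set (Fin n)} (h : Nice G V1 V2 S') :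
    Nice G V2 V1 S' :=
  fun ⟨i, j, hi, hj, hij⟩ => h ⟨j, i, hj, hi, hij.symm⟩

namespace ComponentsOf

variable {G : SimpleGraph (Fin n)} {S V1 V2 : Set (Fin n)} {a b x : Fin n}

theorem symm (h : ComponentsOf G S V1 V2) : ComponentsOf G S V2 V1 :=
  ⟨Set.union_comm V2 V1 ▸ h.1, h.2.1.symm, h.2.2.2.1, h.2.2.1, h.2.2.2.2.2.1, h.2.2.2.2.1,
    fun a ha b hb hab => h.2.2.2.2.2.2 b hb a ha hab.symm⟩

theorem notMem_cut (h : ComponentsOf G S V1 V2) (ha : a ∈ V1) : a ∉ S :=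
  (h.1 ▸ Set.subset_union_left : V1 ⊆ Sᶜ) ha

theorem notMem_right (h : ComponentsOf G S V1 V2) (ha : a ∈ V1) : a ∉ V2 :=
  Set.disjoint_left.1 h.2.1 ha

theorem not_adj (h : ComponentsOf G S V1 V2) (ha : a ∈ V1) (hb : b ∈ V2) : ¬ G.Adj a b :=
  fun hab => h.2.2.2.2.2.2 a ha b hb (.of_adj (h.notMem_cut ha) (h.symm.notMem_cut hb) hab)

theorem mem_of_adj (h : ComponentsOf G S V1 V2) (ha : a ∈ V1) (hax : G.Adj a x) (hx : x ∉ S) :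
    x ∈ V1 := by
  rcases (h.1.symm ▸ hx : x ∈ V1 ∪ V2) with hx | hx
  · exact hx
  · exact absurd hax (h.not_adj ha hx)

theorem exists_adj {k : ℕ} (hcut : IsMinKCut G S k) (h : ComponentsOf G S V1 V2) {s : Fin n}
    (hs : s ∈ S) : ∃ a ∈ V1, G.Adj s a := by
  obtain ⟨x, hx, y, hy, hsx, hsy, hxy⟩ := (isMinKCut_iff.1 hcut).2.2.2 s hs
  rcases (h.1.symm ▸ hx : x ∈ V1 ∪ V2) with hx1 | hx2
  · exact ⟨x, hx1, hsx⟩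
  rcases (h.1.symm ▸ hy : y ∈ V1 ∪ V2) with hy1 | hy2
  · exact ⟨y, hy1, hsy⟩
  · exact absurd (h.2.2.2.2.2.1 x hx2 y hy2) hxy

end ComponentsOf

section Transversal

variable {G : SimpleGraph (Fin n)} {S V1 V2 B : Set (Fin n)}

theorem transversal_of_connDom (hS : S.Nonempty) (hcomp : ComponentsOf G S V1 V2)
    (hB : B ⊆ V1 ∪ V2) (h1 : (B ∩ V1).Nonempty) (h2 : (B ∩ V2).Nonempty)
    (hD₁ : ConnDom G (V1 ∪ S) (B ∩ V1)) (hD₂ : ConnDom G (V2 ∪ S) (B ∩ V2)) :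
    ∀ S' ∈ minSet G, S' ≠ S → Nice G V1 V2 S' → (B ∩ (S' \ S)).Nonempty := by
  intro S' hS' hne hnice
  obtain ⟨b₁, hb₁⟩ := h1
  obtain ⟨b₂, hb₂⟩ := h2
  by_contra hBS'
  have hBS : ∀ x ∈ B, x ∉ S := fun x hx => by
    rcases hB hx with h | h
    exacts [hcomp.notMem_cut h, hcomp.symm.notMem_cut h]
  have hdisj : ∀ V, Disjoint (B ∩ V) S' := fun V => Set.disjoint_left.2 fun x hx hxS' =>
    hBS' ⟨x, hx.1, hxS', hBS x hx.1⟩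
  have hside₁ : ∀ x ∈ V1 ∪ S, x ∉ S' → SameComp G S'ᶜ x b₁ := fun x hx hxS' =>
    hD₁.sameComp (hdisj V1) hb₁ hx hxS'
  have hside₂ : ∀ x ∈ V2 ∪ S, x ∉ S' → SameComp G S'ᶜ x b₂ := fun x hx hxS' =>
    hD₂.sameComp (hdisj V2) hb₂ hx hxS'
  have hb₁S' : b₁ ∉ S' := Set.disjoint_left.1 (hdisj V1) hb₁
  have hb₂S' : b₂ ∉ S' := Set.disjoint_left.1 (hdisj V2) hb₂
  have hSS' : S ⊆ S' := fun s hs => by_contra fun hsS' => hnice ⟨b₁, b₂, ⟨hb₁.2, hb₁S'⟩,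
    ⟨hb₂.2, hb₂S'⟩, (hside₁ s (.inr hs) hsS').symm.trans (hside₂ s (.inr hs) hsS')⟩
  obtain ⟨w, hwS', hwS⟩ := Set.exists_of_ssubset (hSS'.ssubset_of_ne hne.symm)
  obtain ⟨k, -, hcut'⟩ := hS'.resolve_left (hS.mono hSS').ne_empty
  obtain ⟨x, hx, y, hy, hwx, hwy, hxy⟩ := (isMinKCut_iff.1 hcut').2.2.2 w hwS'
  have hxS : x ∉ S := fun h => hx (hSS' h)
  have hyS : y ∉ S := fun h => hy (hSS' h)
  rcases (hcomp.1.symm ▸ hwS : w ∈ V1 ∪ V2) with hw | hw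
  · exact hxy ((hside₁ x (.inl (hcomp.mem_of_adj hw hwx hxS)) hx).trans
      (hside₁ y (.inl (hcomp.mem_of_adj hw hwy hyS)) hy).symm)
  · exact hxy ((hside₂ x (.inl (hcomp.symm.mem_of_adj hw hwx hxS)) hx).trans
      (hside₂ y (.inl (hcomp.symm.mem_of_adj hw hwy hyS)) hy).symm)

end Transversal

/-- Candidates `S' = A ∪ S₀` with `A ⊆ V1 \ B`, `S₀ ⊆ S` for a nice cut missing `B`. By
`closed`, `G[S'ᶜ]` splits into the component `V2 ∪ (S \ S')` and the components of
`G[V1 \ S']`; `separates` excludes `S' = S`. -/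
structure IsLeftSeparator (G : SimpleGraph (Fin n)) (S V1 B S' : Set (Fin n)) : Prop where
  subset : S' ⊆ (V1 \ B) ∪ S
  closed : ∀ s ∈ S, s ∉ S' → ∀ w ∈ V1, G.Adj s w → w ∈ S'
  separates : (∃ p ∈ V1 \ S', ∃ q ∈ V1 \ S', ¬ SameComp G S'ᶜ p q) ∨
    ((V1 \ S').Nonempty ∧ ¬ S ⊆ S')

/-- Removing a vertex of `V1` from a separator may force vertices of `S` into it, hence the
lexicographic order. -/
noncomputable def leftWeight (V1 S' : Set (Fin n)) : ℕ ×ₗ ℕ :=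
  toLex ((S' ∩ V1).ncard, S'.ncard)

namespace IsLeftSeparator

variable {G : SimpleGraph (Fin n)} {S V1 V2 B S' : Set (Fin n)} {k : ℕ} {p q t : Fin n}

theorem mem_left_of_sameComp (hcomp : ComponentsOf G S V1 V2) (h : IsLeftSeparator G S V1 B S')
    (hp : p ∈ V1) (hpS' : p ∉ S') (hpq : SameComp G S'ᶜ p q) : q ∈ V1 := by
  have hclosed : ∀ x ∈ V1 \ S', ∀ y ∈ S'ᶜ, G.Adj x y → y ∈ V1 \ S' := by
    intro x hx y hy hxy
    have hyS : y ∉ S := fun hyS => hx.2 (h.closed y hyS hy x hx.1 hxy.symm)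
    exact ⟨hcomp.mem_of_adj hx.1 hxy hyS, hy⟩
  exact (SameComp.of_closed hclosed ⟨hp, hpS'⟩ hpq).2.1.1

theorem forall_adj_mem_of_not_joinsComps (hcomp : ComponentsOf G S V1 V2)
    (h : IsLeftSeparator G S V1 B S') (hjoin : ¬ JoinsComps G S'ᶜ t) {y : Fin n} (hyS' : y ∉ S')
    (hyV : y ∉ V1) (hty : G.Adj t y) : ∀ w ∈ V1, G.Adj t w → w ∈ S' := fun w hw htw =>
  by_contra fun hwS' => hjoin ⟨w, hwS', y, hyS', htw, hty,
    fun hwy => hyV (h.mem_left_of_sameComp hcomp hw hwS' hwy)⟩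

theorem nonempty_diff (h : IsLeftSeparator G S V1 B S') : (V1 \ S').Nonempty := by
  rcases h.separates with ⟨p, hp, -⟩ | ⟨hne, -⟩
  exacts [⟨p, hp⟩, hne]

theorem diff_singleton_of_mem_cut (hcomp : ComponentsOf G S V1 V2)
    (h : IsLeftSeparator G S V1 B S') (htS : t ∈ S) (hadj : ∀ w ∈ V1, G.Adj t w → w ∈ S') :
    IsLeftSeparator G S V1 B (S' \ {t}) where
  subset := Set.sdiff_subset.trans h.subset
  closed s hs hsS'' w hw hsw := by
    have hwt : w ≠ t := fun hwt => hcomp.notMem_cut hw (hwt ▸ htS)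
    by_cases hst : s = t
    · exact ⟨hadj w hw (hst ▸ hsw), hwt⟩
    · exact ⟨h.closed s hs (fun hsS' => hsS'' ⟨hsS', hst⟩) w hw hsw, hwt⟩
  separates := .inr ⟨h.nonempty_diff.mono (Set.sdiff_subset_sdiff_right Set.sdiff_subset),
    fun hSS' => (hSS' htS).2 rfl⟩

theorem diff_singleton_union_of_mem_left (hcomp : ComponentsOf G S V1 V2)
    (h : IsLeftSeparator G S V1 B S') (ht : t ∈ S') (htV : t ∈ V1)
    (hjoin : ¬ JoinsComps G S'ᶜ t) :
    IsLeftSeparator G S V1 B (S' \ {t} ∪ {s | s ∈ S ∧ G.Adj t s}) where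
  subset := by
    rintro x (⟨hx, -⟩ | ⟨hxS, -⟩)
    exacts [h.subset hx, .inr hxS]
  closed s hs hsS'' w hw hsw := by
    have hst : s ≠ t := fun hst => hcomp.notMem_cut htV (hst ▸ hs)
    have hsS' : s ∉ S' := fun hsS' => hsS'' (.inl ⟨hsS', hst⟩)
    have hwt : w ≠ t := fun hwt => hsS'' (.inr ⟨hs, hwt ▸ hsw.symm⟩)
    exact .inl ⟨h.closed s hs hsS' w hw hsw, hwt⟩
  separates := by
    set S'' := S' \ {t} ∪ {s | s ∈ S ∧ G.Adj t s}
    have hcompl : S''ᶜ ⊆ S'ᶜ ∪ {t} := fun x hx => by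
      by_cases hxt : x = t
      exacts [.inr hxt, .inl fun hxS' => hx (.inl ⟨hxS', hxt⟩)]
    have hleft : ∀ p ∈ V1 \ S', p ∈ V1 \ S'' := fun p hp =>
      ⟨hp.1, by rintro (⟨hpS', -⟩ | ⟨hpS, -⟩); exacts [hp.2 hpS', hcomp.notMem_cut hp.1 hpS]⟩
    rcases h.separates with ⟨p, hp, q, hq, hpq⟩ | ⟨⟨p, hp⟩, hSS'⟩
    · refine .inl ⟨p, hleft p hp, q, hleft q hq, fun hpq'' => hpq ?_⟩
      exact SameComp.of_union_singleton (fun htc => htc ht) hjoin hp.2 hq.2 (hpq''.mono hcompl)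
    by_cases hSS'' : S ⊆ S''
    · obtain ⟨s₀, hs₀S, hs₀S'⟩ := Set.not_subset.1 hSS'
      have hts₀ : G.Adj t s₀ := by
        rcases hSS'' hs₀S with ⟨hmem, -⟩ | ⟨-, hts₀⟩
        exacts [absurd hmem hs₀S', hts₀]
      have hadj := h.forall_adj_mem_of_not_joinsComps hcomp hjoin hs₀S'
        (fun hs₀V => hcomp.notMem_cut hs₀V hs₀S) hts₀
      have hisolated : ∀ y ∈ S''ᶜ, ¬ G.Adj t y := by
        intro y hy hty
        by_cases hyS : y ∈ S
        · exact hy (.inr ⟨hyS, hty⟩)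
        · exact hy (.inl ⟨hadj y (hcomp.mem_of_adj htV hty hyS) hty, (G.ne_of_adj hty).symm⟩)
      have htS'' : t ∈ V1 \ S'' :=
        ⟨htV, by rintro (⟨-, htt⟩ | ⟨htS, -⟩); exacts [htt rfl, hcomp.notMem_cut htV htS]⟩
      refine .inl ⟨p, hleft p hp, t, htS'', fun hpt => hp.2 ?_⟩
      exact SameComp.eq_of_forall_not_adj hisolated hpt.symm ▸ ht
    · exact .inr ⟨⟨p, hleft p hp⟩, hSS''⟩

theorem exists_leftWeight_lt (hcut : IsMinKCut G S k) (hcomp : ComponentsOf G S V1 V2)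
    (h : IsLeftSeparator G S V1 B S') (ht : t ∈ S') (hjoin : ¬ JoinsComps G S'ᶜ t) :
    ∃ S'', IsLeftSeparator G S V1 B S'' ∧ leftWeight V1 S'' < leftWeight V1 S' := by
  rcases h.subset ht with ⟨htV, -⟩ | htS
  · refine ⟨_, h.diff_singleton_union_of_mem_left hcomp ht htV hjoin, ?_⟩
    have hlt : ((S' \ {t} ∪ {s | s ∈ S ∧ G.Adj t s}) ∩ V1).ncard < (S' ∩ V1).ncard := by
      refine Set.ncard_lt_ncard (Set.ssubset_iff_of_subset ?_ |>.2 ⟨t, ⟨ht, htV⟩, ?_⟩)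
      · rintro x ⟨⟨hx, -⟩ | ⟨hxS, -⟩, hxV⟩
        exacts [⟨hx, hxV⟩, absurd hxS (hcomp.notMem_cut hxV)]
      · rintro ⟨⟨-, htt⟩ | ⟨htS, -⟩, -⟩
        exacts [htt rfl, hcomp.notMem_cut htV htS]
    exact Prod.Lex.toLex_lt_toLex'.2 ⟨hlt.le, fun heq => absurd heq hlt.ne⟩
  · obtain ⟨y, hy, hty⟩ := hcomp.symm.exists_adj hcut htS
    have hyS' : y ∉ S' := fun hyS' => by
      rcases h.subset hyS' with ⟨hyV, -⟩ | hyS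
      exacts [hcomp.notMem_right hyV hy, hcomp.symm.notMem_cut hy hyS]
    have hadj :=
      h.forall_adj_mem_of_not_joinsComps hcomp hjoin hyS' (hcomp.symm.notMem_right hy) hty
    refine ⟨_, h.diff_singleton_of_mem_cut hcomp htS hadj, ?_⟩
    exact Prod.Lex.toLex_lt_toLex'.2 ⟨Set.ncard_le_ncard (Set.inter_subset_inter_left _
      Set.sdiff_subset), fun _ => Set.ncard_sdiff_singleton_lt_of_mem ht⟩

theorem exists_forall_joinsComps (hcut : IsMinKCut G S k) (hcomp : ComponentsOf G S V1 V2)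
    (h : IsLeftSeparator G S V1 B S') :
    ∃ S'', IsLeftSeparator G S V1 B S'' ∧ ∀ t ∈ S'', JoinsComps G S''ᶜ t := by
  obtain ⟨S'', hS'', hmin⟩ := Set.exists_min_image {X | IsLeftSeparator G S V1 B X}
    (leftWeight V1) (Set.toFinite _) ⟨S', h⟩
  refine ⟨S'', hS'', fun t ht => by_contra fun hjoin => ?_⟩
  obtain ⟨X, hX, hlt⟩ := hS''.exists_leftWeight_lt hcut hcomp ht hjoin
  exact (hmin X hX).not_gt hlt

theorem nice_minCut (hcut : IsMinKCut G S k) (hcomp : ComponentsOf G S V1 V2)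
    (h : IsLeftSeparator G S V1 B S') (hjoin : ∀ t ∈ S', JoinsComps G S'ᶜ t) :
    S' ∈ minSet G ∧ S' ≠ S ∧ Nice G V1 V2 S' ∧ B ∩ (S' \ S) = ∅ := by
  have hS'S : ∀ x ∈ S', x ∉ S → x ∈ V1 \ B := fun x hx hxS =>
    (h.subset hx).resolve_right hxS
  obtain ⟨a, haS', haV⟩ : (S' ∩ V1).Nonempty := by
    by_contra hempty
    have hS'V : ∀ x ∈ S', x ∉ V1 := fun x hx hxV => hempty ⟨x, hx, hxV⟩
    have hSS' : S ⊆ S' := fun s hs => by_contra fun hsS' => by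
      obtain ⟨w, hw, hsw⟩ := hcomp.exists_adj hcut hs
      exact hS'V w (h.closed s hs hsS' w hw hsw) hw
    have hcompl : Sᶜ ⊆ S'ᶜ := Set.compl_subset_compl.2 fun x hx =>
      by_contra fun hxS => hS'V x hx (hS'S x hx hxS).1
    rcases h.separates with ⟨p, hp, q, hq, hpq⟩ | ⟨-, hSS''⟩
    exacts [hpq ((hcomp.2.2.2.2.1 p hp.1 q hq.1).mono hcompl), hSS'' hSS']
  obtain ⟨b, hb⟩ := hcomp.2.2.2.1
  have hbS' : b ∉ S' := fun hbS' =>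
    hcomp.notMem_right (hS'S b hbS' (hcomp.symm.notMem_cut hb)).1 hb
  refine ⟨.inr ⟨_, two_le_numComp_of_joinsComps (hjoin a haS'),
    isMinKCut_iff.2 ⟨⟨a, haS'⟩, fun huniv => hbS' (huniv ▸ Set.mem_univ b), rfl, hjoin⟩⟩,
    fun hS'S => hcomp.notMem_cut haV (hS'S ▸ haS'), ?_, ?_⟩
  · rintro ⟨i, j, hi, hj, hij⟩
    exact hcomp.notMem_right (h.mem_left_of_sameComp hcomp hi.1 hi.2 hij) hj.1
  · exact Set.eq_empty_of_forall_notMem fun x ⟨hxB, hxS', hxS⟩ => (hS'S x hxS' hxS).2 hxB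

theorem false_of_transversal (hcut : IsMinKCut G S k) (hcomp : ComponentsOf G S V1 V2)
    (hT : ∀ S' ∈ minSet G, S' ≠ S → Nice G V1 V2 S' → (B ∩ (S' \ S)).Nonempty)
    (h : IsLeftSeparator G S V1 B S') : False := by
  obtain ⟨S'', hS'', hjoin⟩ := h.exists_forall_joinsComps hcut hcomp
  obtain ⟨hmin, hne, hnice, hempty⟩ := hS''.nice_minCut hcut hcomp hjoin
  exact (hT S'' hmin hne hnice).ne_empty hempty

end IsLeftSeparator

section Domination

variable {G : SimpleGraph (Fin n)} {S V1 V2 B : Set (Fin n)} {k : ℕ}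

theorem isLeftSeparator_of_not_sameComp (hcomp : ComponentsOf G S V1 V2) {u v : Fin n}
    (hu : u ∈ B ∩ V1) (hv : v ∈ B ∩ V1) (huv : ¬ SameComp G (B ∩ V1) u v) :
    IsLeftSeparator G S V1 B ((V1 \ B) ∪ S) where
  subset := subset_rfl
  closed _ hs hsS' := absurd (.inr hs) hsS'
  separates := by
    have hout : ∀ x ∈ B ∩ V1, x ∈ V1 \ ((V1 \ B) ∪ S) := fun x hx =>
      ⟨hx.2, by rintro (⟨-, hxB⟩ | hxS); exacts [hxB hx.1, hcomp.notMem_cut hx.2 hxS]⟩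
    refine .inl ⟨u, hout u hu, v, hout v hv, fun huv' => huv (.of_closed ?_ hu huv')⟩
    intro x hx y hy hxy
    have hyS : y ∉ S := fun hyS => hy (.inr hyS)
    have hyV := hcomp.mem_of_adj hx.2 hxy hyS
    exact ⟨by_contra fun hyB => hy (.inl ⟨hyV, hyB⟩), hyV⟩

theorem isLeftSeparator_of_not_dominated (hcomp : ComponentsOf G S V1 V2) {b v : Fin n}
    (hb : b ∈ B ∩ V1) (hv : v ∈ V1 ∪ S) (hvB : v ∉ B ∩ V1) (hno : ∀ a ∈ B ∩ V1, ¬ G.Adj v a) :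
    IsLeftSeparator G S V1 B ({x | x ∈ V1 ∧ G.Adj v x} ∪ (S \ {v})) where
  subset := by
    rintro x (⟨hxV, hvx⟩ | ⟨hxS, -⟩)
    exacts [.inl ⟨hxV, fun hxB => hno x ⟨hxB, hxV⟩ hvx⟩, .inr hxS]
  closed s hs hsS' w hw hsw := by
    obtain rfl : s = v := by_contra fun hsv => hsS' (.inr ⟨hs, hsv⟩)
    exact .inl ⟨hw, hsw⟩
  separates := by
    have hbS' : b ∈ V1 \ ({x | x ∈ V1 ∧ G.Adj v x} ∪ (S \ {v})) :=
      ⟨hb.2, by rintro (⟨-, hvb⟩ | ⟨hbS, -⟩); exacts [hno b hb hvb, hcomp.notMem_cut hb.2 hbS]⟩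
    have hvS' : v ∉ {x | x ∈ V1 ∧ G.Adj v x} ∪ (S \ {v}) := by
      rintro (⟨-, hvv⟩ | ⟨-, hvv⟩)
      exacts [G.loopless.irrefl v hvv, hvv rfl]
    rcases hv with hvV | hvS
    · have hisolated : ∀ y ∈ ({x | x ∈ V1 ∧ G.Adj v x} ∪ (S \ {v}))ᶜ, ¬ G.Adj v y := by
        intro y hy hvy
        have hyS : y ∉ S := fun hyS => hy (.inr ⟨hyS, (G.ne_of_adj hvy).symm⟩)
        exact hy (.inl ⟨hcomp.mem_of_adj hvV hvy hyS, hvy⟩)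
      refine .inl ⟨b, hbS', v, ⟨hvV, hvS'⟩, fun hbv => hvB ?_⟩
      exact SameComp.eq_of_forall_not_adj hisolated hbv.symm ▸ hb
    · exact .inr ⟨⟨b, hbS'⟩, fun hSS' => hvS' (hSS' hvS)⟩

theorem connDom_of_transversal (hcut : IsMinKCut G S k) (hcomp : ComponentsOf G S V1 V2)
    (h1 : (B ∩ V1).Nonempty)
    (hT : ∀ S' ∈ minSet G, S' ≠ S → Nice G V1 V2 S' → (B ∩ (S' \ S)).Nonempty) :
    ConnDom G (V1 ∪ S) (B ∩ V1) := by
  obtain ⟨b, hb⟩ := h1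
  refine ⟨Set.inter_subset_right.trans Set.subset_union_left,
    induce_connected_iff_sameComp.2 ⟨⟨b, hb⟩, fun u hu v hv => by_contra fun huv => ?_⟩,
    fun v hv hvB => by_contra fun hno => ?_⟩
  · exact (isLeftSeparator_of_not_sameComp hcomp hu hv huv).false_of_transversal hcut hcomp hT
  · exact (isLeftSeparator_of_not_dominated hcomp hb hv hvB fun a ha hva => hno ⟨a, ha, hva⟩
      ).false_of_transversal hcut hcomp hT

end Domination

theorem stmt2_general {n : ℕ} (G : SimpleGraph (Fin n))
    (S V1 V2 : Set (Fin n)) (hcut : IsMinKCut G S 2) (hcomp : ComponentsOf G S V1 V2)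
    (B : Set (Fin n)) (hB : B ⊆ V1 ∪ V2)
    (h1 : (B ∩ V1).Nonempty) (h2 : (B ∩ V2).Nonempty) :
    (∀ S' ∈ minSet G, S' ≠ S → Nice G V1 V2 S' → (B ∩ (S' \ S)).Nonempty) ↔
      (ConnDom G (V1 ∪ S) (B ∩ V1) ∧ ConnDom G (V2 ∪ S) (B ∩ V2)) := by
  refine ⟨fun hT => ⟨connDom_of_transversal hcut hcomp h1 hT, ?_⟩,
    fun ⟨hD₁, hD₂⟩ => transversal_of_connDom hcut.1 hcomp hB h1 h2 hD₁ hD₂⟩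
  exact connDom_of_transversal hcut hcomp.symm h2 fun S' hS' hne hnice =>
    hT S' hS' hne hnice.symm

/-- transversals of the nice minimal cuts. -/
theorem stmt2 {n : ℕ} (G : SimpleGraph (Fin n)) (hG : G.Connected)
    (S V1 V2 : Set (Fin n)) (hcut : IsMinKCut G S 2) (hcomp : ComponentsOf G S V1 V2)
    (B : Set (Fin n)) (hB : B ⊆ V1 ∪ V2)
    (h1 : (B ∩ V1).Nonempty) (h2 : (B ∩ V2).Nonempty) :
    (∀ S' ∈ minSet G, S' ≠ S → Nice G V1 V2 S' → (B ∩ (S' \ S)).Nonempty) ↔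
      (ConnDom G (V1 ∪ S) (B ∩ V1) ∧ ConnDom G (V2 ∪ S) (B ∩ V2)) :=
  stmt2_general G S V1 V2 hcut hcomp B hB h1 h2
end

section
/- Let G be a graph on [n], let i, j be vertices of G, and let B ⊆ V(G) be a set such that there is a path i, j_1, ..., j_s, j in G with {j_1,...,j_s} ⊆ B. Let {C, D} be any partition of B. Then the polynomial (∏_{k∈C} x_k)(∏_{k∈D} y_k)·(x_i y_j − x_j y_i) belongs to the binomial edge ideal J_G of G in the polynomial ring K[x_1,...,x_n,y_1,...,y_n]. -/
open MvPolynomial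

variable {n : ℕ}

lemma fij_mem {G : SimpleGraph (Fin n)} {i j : Fin n} (h : G.Adj i j) :
    fij i j ∈ beIdeal G :=
  Ideal.subset_span ⟨i, j, h, rfl⟩

lemma stmt3_aux (G : SimpleGraph (Fin n)) {i j : Fin n} (w : G.Walk i j) : w.IsPath →
    ∀ C D : Finset (Fin n), Disjoint C D →
    (∀ v ∈ w.support, v ≠ i → v ≠ j → v ∈ C ∪ D) →
    (∏ k ∈ C, (X (Sum.inl k) : PolyRing n)) * (∏ k ∈ D, (X (Sum.inr k) : PolyRing n)) *
      fij i j ∈ beIdeal G := by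
  induction w with
  | nil =>
    intro _ C D _ _
    rw [show fij _ _ = (0 : PolyRing n) by simp [fij], mul_zero]
    exact Ideal.zero_mem _
  | @cons i k j hadj p ih =>
    intro hw C D hdisj hB
    rw [SimpleGraph.Walk.cons_isPath_iff] at hw
    by_cases hk : k ∈ C ∪ D
    · have hiB : ∀ v ∈ p.support, v ≠ k → v ≠ j → v ∈ C ∪ D := by
        intro v hv hvk hvj
        refine hB v (by simp [hv]) ?_ hvj
        rintro rfl; exact hw.2 hv
      rcases Finset.mem_union.mp hk with hkC | hkD
      · have hdisj' : Disjoint (C.erase k) D :=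
          Finset.disjoint_of_subset_left (Finset.erase_subset _ _) hdisj
        have hB' : ∀ v ∈ p.support, v ≠ k → v ≠ j → v ∈ C.erase k ∪ D := by
          intro v hv hvk hvj
          rcases Finset.mem_union.mp (hiB v hv hvk hvj) with h | h
          · exact Finset.mem_union_left _ (Finset.mem_erase.mpr ⟨hvk, h⟩)
          · exact Finset.mem_union_right _ h
        have h1 := ih hw.1 (C.erase k) D hdisj' hB'
        have h2 : fij i k ∈ beIdeal G := fij_mem hadj
        have heq : (∏ m ∈ C, (X (Sum.inl m) : PolyRing n)) * (∏ m ∈ D, X (Sum.inr m)) *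
            fij i j =
            X (Sum.inl i) * ((∏ m ∈ C.erase k, X (Sum.inl m)) * (∏ m ∈ D, X (Sum.inr m)) *
              fij k j) +
            ((∏ m ∈ C.erase k, X (Sum.inl m)) * (∏ m ∈ D, X (Sum.inr m)) * X (Sum.inl j)) *
              fij i k := by
          rw [← Finset.mul_prod_erase C _ hkC]
          simp only [fij]; ring
        rw [heq]
        exact add_mem (Ideal.mul_mem_left _ _ h1) (Ideal.mul_mem_left _ _ h2)
      · have hdisj' : Disjoint C (D.erase k) :=
          Finset.disjoint_of_subset_right (Finset.erase_subset _ _) hdisj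
        have hB' : ∀ v ∈ p.support, v ≠ k → v ≠ j → v ∈ C ∪ D.erase k := by
          intro v hv hvk hvj
          rcases Finset.mem_union.mp (hiB v hv hvk hvj) with h | h
          · exact Finset.mem_union_left _ h
          · exact Finset.mem_union_right _ (Finset.mem_erase.mpr ⟨hvk, h⟩)
        have h1 := ih hw.1 C (D.erase k) hdisj' hB'
        have h2 : fij i k ∈ beIdeal G := fij_mem hadj
        have heq : (∏ m ∈ C, (X (Sum.inl m) : PolyRing n)) * (∏ m ∈ D, X (Sum.inr m)) *
            fij i j =
            X (Sum.inr i) * ((∏ m ∈ C, X (Sum.inl m)) * (∏ m ∈ D.erase k, X (Sum.inr m)) *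
              fij k j) +
            ((∏ m ∈ C, X (Sum.inl m)) * (∏ m ∈ D.erase k, X (Sum.inr m)) * X (Sum.inr j)) *
              fij i k := by
          rw [← Finset.mul_prod_erase D _ hkD]
          simp only [fij]; ring
        rw [heq]
        exact add_mem (Ideal.mul_mem_left _ _ h1) (Ideal.mul_mem_left _ _ h2)
    · have hki : k ≠ i := by rintro rfl; exact hw.2 p.start_mem_support
      have hkj : k = j := by
        by_contra hne
        exact hk (hB k (by simp [p.start_mem_support]) hki hne)
      subst hkj
      exact Ideal.mul_mem_left _ _ (fij_mem hadj)

/-- if `i`, `j` are connected through `B` then `g_{C,D}·f_{i,j} ∈ J_G`. -/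
theorem stmt3 {n : ℕ} (G : SimpleGraph (Fin n)) (i j : Fin n) (B C D : Finset (Fin n))
    (hpath : ∃ w : G.Walk i j, w.IsPath ∧ ∀ v ∈ w.support, v ≠ i → v ≠ j → v ∈ B)
    (hCD : C ∪ D = B) (hdisj : Disjoint C D) :
    (∏ k ∈ C, (X (Sum.inl k) : PolyRing n)) * (∏ k ∈ D, (X (Sum.inr k) : PolyRing n)) *
      fij i j ∈ beIdeal G := by
  obtain ⟨w, hwp, hwB⟩ := hpath
  exact stmt3_aux G w hwp C D hdisj (fun v hv hvi hvj => hCD ▸ hwB v hv hvi hvj)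
end

section
/- Let C_n be the cycle graph and S ∈ min(C_n) such that the complement of S contains at least two intervals of size one, say I_{j_1} = {r} and I_{j_2} = {s}. Then there exists a permutation σ of [n] that is S-consistent: it satisfies, for each j, (i) if σ(b_j) < σ(a_{j+1}) and |I_{j+1}| ≥ 2 then σ(a_{j+1}) < σ(a_{j+1}+1); (ii) if σ(b_j) < σ(a_{j+1}) and |I_j| ≥ 2 then σ(b_j − 1) < σ(b_j); (iii) if σ(b_j) > σ(a_{j+1}) and |I_{j+1}| ≥ 2 then σ(a_{j+1}) > σ(a_{j+1}+1); (iv) if σ(b_j) > σ(a_{j+1}) and |I_j| ≥ 2 then σ(b_j − 1) > σ(b_j); (v) if |I_j| ≥ 3 then σ is strictly monotone along I_j. -/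
open MvPolynomial

variable {n : ℕ}

/-!
Take `σ` increasing along the cycle from `r` to `s` and decreasing from `s` back to `r`, so
that `σ` keeps its direction at every vertex other than `r` and `s`. Each condition of
`SConsistent` only asks `σ` to keep its direction at vertices that lie in `S` or have a
neighbour outside `S`; `r` and `s` are neither, since both their neighbours lie in `S`.
-/

open Equiv Function

section TurnsOnlyAt

variable [NeZero n] {α : Type*} [LinearOrder α]

def TurnsOnlyAt (f : Fin n → α) (r s : Fin n) : Prop :=
  ∀ w, w ≠ r → w ≠ s → (f (w - 1) < f w ↔ f w < f (w + 1))

lemma TurnsOnlyAt.comp_sub_right {f : Fin n → α} {r s : Fin n} (h : TurnsOnlyAt f r s)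
    (c : Fin n) : TurnsOnlyAt (fun v => f (v - c)) (r + c) (s + c) := by
  intro w hr hs
  have := h (w - c) (fun e => hr (by grind)) (fun e => hs (by grind))
  rwa [show w - c - 1 = w - 1 - c by grind, show w - c + 1 = w + 1 - c by grind] at this

lemma sConsistent_of_turnsOnlyAt {S : Set (Fin n)} {σ : Perm (Fin n)} {r s : Fin n}
    (hσ : TurnsOnlyAt σ r s) (hr : r ∉ S ∧ r - 1 ∈ S ∧ r + 1 ∈ S)
    (hs : s ∉ S ∧ s - 1 ∈ S ∧ s + 1 ∈ S) : SConsistent n S σ := by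
  refine ⟨fun x hx hx1 => ?_, fun y _ _ hy1 =>
    hσ y (fun h => hy1 (h ▸ hr.2.2)) (fun h => hy1 (h ▸ hs.2.2))⟩
  have hne : ∀ u v : Fin n, u + 1 = v → u ≠ v := fun u v huv e =>
    hx (by rwa [show x + 1 = x by grind] at hx1)
  have desc : ∀ u v : Fin n, u + 1 = v → (σ v < σ u ↔ ¬ σ u < σ v) := fun u v huv =>
    ⟨lt_asymm, fun h => (σ.injective.ne (hne u v huv).symm).lt_of_le (not_lt.mp h)⟩
  have keepAt1 : σ x < σ (x + 1) ↔ σ (x + 1) < σ (x + 2) := by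
    have := hσ (x + 1) (fun h => hr.1 (h ▸ hx1)) (fun h => hs.1 (h ▸ hx1))
    rwa [add_sub_cancel_right, show x + 1 + 1 = x + 2 by grind] at this
  have keepAt2 : x + 3 ∉ S → (σ (x + 1) < σ (x + 2) ↔ σ (x + 2) < σ (x + 3)) := by
    intro h3
    rw [show x + 3 = x + 2 + 1 by grind] at h3 ⊢
    have := hσ (x + 2) (fun h => h3 (h ▸ hr.2.2)) (fun h => h3 (h ▸ hs.2.2))
    rwa [show x + 2 - 1 = x + 1 by grind] at this
  have keepAt0 : x - 1 ∉ S → (σ (x - 1) < σ x ↔ σ x < σ (x + 1)) := fun h0 =>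
    hσ x (fun h => h0 (h ▸ hr.2.1)) (fun h => h0 (h ▸ hs.2.1))
  have up : σ x < σ (x + 2) → σ x < σ (x + 1) ∧ σ (x + 1) < σ (x + 2) := by
    intro hlt
    by_contra hnot
    have h1 := (desc x _ rfl).2 fun h => hnot ⟨h, keepAt1.1 h⟩
    have h2 := (desc (x + 1) (x + 2) (by grind)).2 fun h => hnot ⟨keepAt1.2 h, h⟩
    exact lt_asymm hlt (h2.trans h1)
  have down : σ (x + 2) < σ x → ¬ σ x < σ (x + 1) ∧ ¬ σ (x + 1) < σ (x + 2) := by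
    intro hlt
    by_contra hnot
    have h : σ x < σ (x + 1) := by tauto
    exact lt_asymm hlt (h.trans (keepAt1.1 h))
  refine ⟨fun hlt h3 => (keepAt2 h3).1 (up hlt).2, fun hlt h0 => (keepAt0 h0).2 (up hlt).1,
    fun hlt h3 => (desc _ _ (by grind)).2 fun h => (down hlt).2 ((keepAt2 h3).2 h),
    fun hlt h0 => (desc _ _ (by grind)).2 fun h => (down hlt).1 ((keepAt0 h0).1 h)⟩

end TurnsOnlyAt

def peakRank (m M : ℕ) (i : Fin (m + 1)) : Fin (m + 1) :=
  ⟨if i < M then i else m + M - i, by split_ifs <;> omega⟩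

lemma peakRank_injective (m M : ℕ) : Injective (peakRank m M) := by
  intro i j h
  have := congrArg Fin.val h
  simp only [peakRank] at this
  ext
  split_ifs at this <;> omega

lemma peakRank_lt_add_one_iff {m M : ℕ} (hM0 : 0 < M) (hM : M ≤ m) (i : Fin (m + 1)) :
    peakRank m M i < peakRank m M (i + 1) ↔ (i : ℕ) < M := by
  rw [Fin.lt_def]
  simp only [peakRank, Fin.val_add_one]
  by_cases hi : i = Fin.last m
  · simp only [hi, if_true, Fin.val_last]
    split_ifs <;> omega
  · simp only [hi, if_false]
    have := Fin.val_lt_last hi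
    split_ifs <;> omega

lemma turnsOnlyAt_peakRank {m M : ℕ} (hM0 : 0 < M) (hM : M ≤ m) :
    TurnsOnlyAt (peakRank m M) 0 ⟨M, by omega⟩ := by
  intro w h0 hMw
  have hw0 : (w : ℕ) ≠ 0 := Fin.val_ne_iff.2 h0
  have hwM : (w : ℕ) ≠ M := fun e => hMw (Fin.ext e)
  have := peakRank_lt_add_one_iff hM0 hM (w - 1)
  rw [sub_add_cancel, Fin.coe_sub_one, if_neg h0] at this
  rw [this, peakRank_lt_add_one_iff hM0 hM]
  omega

lemma exists_perm_turnsOnlyAt [NeZero n] {r s : Fin n} (hrs : r ≠ s) :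
    ∃ σ : Perm (Fin n), TurnsOnlyAt σ r s := by
  obtain ⟨m, rfl⟩ : ∃ m, n = m + 1 := Nat.exists_eq_add_one.2 (Nat.pos_of_neZero n)
  have hM0 : 0 < (s - r).val := Fin.pos_iff_ne_zero.2 (sub_ne_zero.2 hrs.symm)
  let τ := Equiv.ofBijective _ (peakRank_injective m (s - r).val).bijective_of_finite
  refine ⟨(Equiv.subRight r).trans τ, ?_⟩
  have := (turnsOnlyAt_peakRank hM0 (Fin.is_le _)).comp_sub_right r
  rwa [Fin.eta, zero_add, sub_add_cancel] at this

theorem stmt6_general {n : ℕ} [NeZero n] (S : Set (Fin n))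
    (r s : Fin n) (hrs : r ≠ s)
    (hr : r ∉ S ∧ r - 1 ∈ S ∧ r + 1 ∈ S)
    (hs : s ∉ S ∧ s - 1 ∈ S ∧ s + 1 ∈ S) :
    ∃ σ : Equiv.Perm (Fin n), SConsistent n S σ := by
  obtain ⟨σ, hσ⟩ := exists_perm_turnsOnlyAt hrs
  exact ⟨σ, sConsistent_of_turnsOnlyAt hσ hr hs⟩

/-- existence of an `S`-consistent permutation when the complement of `S`
has at least two singleton intervals. -/
theorem stmt6 {n : ℕ} [NeZero n] (hn : 3 ≤ n) (S : Set (Fin n)) (hS : S ∈ minSet (cycG n))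
    (r s : Fin n) (hrs : r ≠ s)
    (hr : r ∉ S ∧ r - 1 ∈ S ∧ r + 1 ∈ S)
    (hs : s ∉ S ∧ s - 1 ∈ S ∧ s + 1 ∈ S) :
    ∃ σ : Equiv.Perm (Fin n), SConsistent n S σ :=
  stmt6_general S r s hrs hr hs
end

section
/- Let G be a simple graph on [n] and let i ∈ [n] be a vertex of the cycle graph C_n. Then the colon ideal (J_{C_n} : x_i) equals the binomial edge ideal J_{C_n^i}, where C_n^i is the graph obtained from C_n by adding the edge {i−1, i+1}. Consequently, for the lexicographic order with x_1 > ... > x_n > y_1 > ... > y_n, the initial ideal of (J_{C_n} : x_i) is contained in in(J_{C_n}) + (x_{i−1}, y_{i−1})·(x_{i+1}, y_{i+1}). -/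
open MvPolynomial

variable {n : ℕ}

/-!
Call two exponent vectors equivalent when one is obtained from the other by swaps
`x_j y_k ↦ x_k y_j` along edges `{j, k}` of `G`. Then `p ∈ J_G` iff the coefficients of `p` sum
to zero over every equivalence class. A class is determined by the multidegree `d` together with
the `x`-degree on each connected component of `G` restricted to the support of `d`, because
tokens can be routed along paths inside that support. Multiplying by `x_i` puts `i` into the
support, which merges exactly the components meeting the neighbourhood of `i`, just as
completing that neighbourhood to a clique does; so `(J_G : x_i) = J_{G_i}` for every graph, and
for the cycle `G_i = C_n^i`.

If the leading monomial of some `f ∈ J_{C_n^i}` has no variable at `i - 1` or none at `i + 1`,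
the chord cannot be used inside its class, so its partner of smaller order in the support of `f`
is already equivalent for `C_n`, and their difference is an element of `J_{C_n}` with the same
leading monomial.
-/

namespace BinomialEdgeIdeal

open Classical

abbrev Exponent (n : ℕ) := (Fin n ⊕ Fin n) →₀ ℕ

noncomputable def xExp (j : Fin n) : Exponent n := Finsupp.single (Sum.inl j) 1

noncomputable def yExp (j : Fin n) : Exponent n := Finsupp.single (Sum.inr j) 1

def multideg : Exponent n →+ (Fin n → ℕ) where
  toFun m j := m (Sum.inl j) + m (Sum.inr j)
  map_zero' := rfl
  map_add' a b := by ext j; simp only [Finsupp.add_apply, Pi.add_apply]; ring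

lemma multideg_apply (m : Exponent n) (j : Fin n) :
    multideg m j = m (Sum.inl j) + m (Sum.inr j) := rfl

@[simp] lemma multideg_xExp (j : Fin n) : multideg (xExp j) = Pi.single j 1 := by
  ext v; rcases eq_or_ne v j with rfl | h <;> simp [multideg_apply, xExp, *]

@[simp] lemma multideg_yExp (j : Fin n) : multideg (yExp j) = Pi.single j 1 := by
  ext v; rcases eq_or_ne v j with rfl | h <;> simp [multideg_apply, yExp, *]

lemma exists_eq_add_single {m : Exponent n} {w : Fin n ⊕ Fin n} (h : m w ≠ 0) :
    ∃ u, m = u + Finsupp.single w 1 := by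
  obtain ⟨u, hu⟩ := exists_add_of_le (Finsupp.single_le_iff.2 (Nat.one_le_iff_ne_zero.2 h))
  exact ⟨u, hu.trans (add_comm _ _)⟩

lemma exists_eq_add_xExp_add_yExp {m : Exponent n} {a b : Fin n} (ha : m (Sum.inl a) ≠ 0)
    (hb : m (Sum.inr b) ≠ 0) : ∃ u, m = u + xExp a + yExp b := by
  obtain ⟨v, rfl⟩ := exists_eq_add_single hb
  obtain ⟨u, rfl⟩ : ∃ u, v = u + xExp a := exists_eq_add_single (by simpa using ha)
  exact ⟨u, rfl⟩

variable {G H : SimpleGraph (Fin n)}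

def SwapStep (G : SimpleGraph (Fin n)) (m m' : Exponent n) : Prop :=
  ∃ j k u, G.Adj j k ∧ m = u + xExp j + yExp k ∧ m' = u + xExp k + yExp j

def SwapEquiv (G : SimpleGraph (Fin n)) : Exponent n → Exponent n → Prop :=
  Relation.EqvGen (SwapStep G)

lemma SwapStep.swapEquiv {m m' : Exponent n} (h : SwapStep G m m') : SwapEquiv G m m' :=
  .rel _ _ h

lemma SwapEquiv.refl (m : Exponent n) : SwapEquiv G m m := Relation.EqvGen.refl m

lemma SwapEquiv.symm {m m' : Exponent n} (h : SwapEquiv G m m') : SwapEquiv G m' m :=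
  Relation.EqvGen.symm _ _ h

lemma SwapEquiv.trans {m m' m'' : Exponent n} (h : SwapEquiv G m m') (h' : SwapEquiv G m' m'') :
    SwapEquiv G m m'' := Relation.EqvGen.trans _ _ _ h h'

lemma SwapStep.multideg_eq {m m' : Exponent n} (h : SwapStep G m m') :
    multideg m = multideg m' := by
  obtain ⟨j, k, u, -, rfl, rfl⟩ := h
  simp only [map_add, multideg_xExp, multideg_yExp]
  abel

lemma SwapEquiv.add_left {m m' : Exponent n} (u : Exponent n) (h : SwapEquiv G m m') :
    SwapEquiv G (u + m) (u + m') := by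
  induction h with
  | rel _ _ h =>
    obtain ⟨j, k, v, hadj, rfl, rfl⟩ := h
    exact SwapStep.swapEquiv ⟨j, k, u + v, hadj, by abel, by abel⟩
  | refl => exact SwapEquiv.refl _
  | symm _ _ _ ih => exact ih.symm
  | trans _ _ _ _ _ ih ih' => exact ih.trans ih'

lemma fij_eq_monomial_sub_monomial (j k : Fin n) :
    fij j k = monomial (xExp j + yExp k) (1 : ℂ) - monomial (xExp k + yExp j) 1 := by
  simp only [fij, X, monomial_mul, one_mul, xExp, yExp]

lemma monomial_sub_monomial_mem_beIdeal {a b : Exponent n} (h : SwapEquiv G a b) :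
    monomial a (1 : ℂ) - monomial b 1 ∈ beIdeal G := by
  induction h with
  | rel _ _ h =>
    obtain ⟨j, k, u, hadj, rfl, rfl⟩ := h
    have : monomial (u + xExp j + yExp k) (1 : ℂ) - monomial (u + xExp k + yExp j) 1 =
        monomial u 1 * fij j k := by
      rw [fij_eq_monomial_sub_monomial, mul_sub, monomial_mul, monomial_mul, one_mul,
        add_assoc, add_assoc]
    rw [this]
    exact Ideal.mul_mem_left _ _ (Ideal.subset_span ⟨j, k, hadj, rfl⟩)
  | refl => simp
  | symm _ _ _ ih => simpa using neg_mem ih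
  | trans _ _ _ _ _ ih ih' => simpa using add_mem ih ih'

/-- Closed under multiplication, hence contains `J_G`; class sums visibly vanish on it. -/
noncomputable def binomialSpan (G : SimpleGraph (Fin n)) : Submodule ℂ (PolyRing n) :=
  Submodule.span ℂ {p | ∃ a b, SwapEquiv G a b ∧ p = monomial a 1 - monomial b 1}

lemma mul_mem_binomialSpan (q : PolyRing n) {p : PolyRing n} (hp : p ∈ binomialSpan G) :
    q * p ∈ binomialSpan G := by
  induction q using MvPolynomial.induction_on' with
  | monomial u c =>
    induction hp using Submodule.span_induction with
    | mem p hp =>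
      obtain ⟨a, b, hab, rfl⟩ := hp
      have : monomial u c * (monomial a 1 - monomial b 1) =
          c • (monomial (u + a) (1 : ℂ) - monomial (u + b) 1) := by
        simp only [mul_sub, monomial_mul, mul_one, smul_sub, smul_monomial, smul_eq_mul]
      rw [this]
      exact Submodule.smul_mem _ _ (Submodule.subset_span ⟨_, _, hab.add_left u, rfl⟩)
    | zero => simp
    | add _ _ _ _ h h' => simpa [mul_add] using add_mem h h'
    | smul c' _ _ h => simpa [mul_smul_comm] using Submodule.smul_mem _ c' h
  | add q q' h h' => simpa [add_mul] using add_mem h h'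

lemma mem_binomialSpan_of_mem_beIdeal {p : PolyRing n} (hp : p ∈ beIdeal G) :
    p ∈ binomialSpan G := by
  induction hp using Submodule.span_induction with
  | mem p hp =>
    obtain ⟨j, k, hadj, rfl⟩ := hp
    rw [fij_eq_monomial_sub_monomial]
    refine Submodule.subset_span ⟨_, _, SwapStep.swapEquiv ⟨j, k, 0, hadj, ?_, ?_⟩, rfl⟩ <;>
      simp
  | zero => exact zero_mem _
  | add _ _ _ _ h h' => exact add_mem h h'
  | smul q _ _ h => exact mul_mem_binomialSpan q h

lemma sum_filter_coeff_eq_of_support_subset (P : Exponent n → Prop) {p : PolyRing n}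
    {s : Finset (Exponent n)} (hs : p.support ⊆ s) :
    ∑ m ∈ p.support with P m, coeff m p = ∑ m ∈ s with P m, coeff m p :=
  Finset.sum_subset (Finset.filter_subset_filter _ hs) fun m hm hm' => by
    simpa [(Finset.mem_filter.1 hm).2] using hm'

noncomputable def classSum (G : SimpleGraph (Fin n)) (m₀ : Exponent n) :
    PolyRing n →ₗ[ℂ] ℂ where
  toFun p := ∑ m ∈ p.support with SwapEquiv G m₀ m, coeff m p
  map_add' p q := by
    rw [sum_filter_coeff_eq_of_support_subset _ support_add,
      sum_filter_coeff_eq_of_support_subset _ (Finset.subset_union_left (s₂ := q.support)),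
      sum_filter_coeff_eq_of_support_subset _ (Finset.subset_union_right (s₁ := p.support))]
    simp only [coeff_add, Finset.sum_add_distrib]
  map_smul' c p := by
    rw [sum_filter_coeff_eq_of_support_subset _ support_smul]
    simp only [coeff_smul, smul_eq_mul, Finset.mul_sum, RingHom.id_apply]

lemma classSum_apply (m₀ : Exponent n) (p : PolyRing n) :
    classSum G m₀ p = ∑ m ∈ p.support with SwapEquiv G m₀ m, coeff m p := rfl

lemma classSum_monomial (m₀ a : Exponent n) (c : ℂ) :
    classSum G m₀ (monomial a c) = if SwapEquiv G m₀ a then c else 0 := by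
  rw [classSum_apply, sum_filter_coeff_eq_of_support_subset _ support_monomial_subset,
    Finset.sum_filter, Finset.sum_singleton, coeff_monomial, if_pos rfl]

lemma classSum_eq_zero_of_mem_beIdeal {p : PolyRing n} (hp : p ∈ beIdeal G) (m₀ : Exponent n) :
    classSum G m₀ p = 0 := by
  suffices binomialSpan G ≤ LinearMap.ker (classSum G m₀) from
    this (mem_binomialSpan_of_mem_beIdeal hp)
  refine Submodule.span_le.2 ?_
  rintro _ ⟨a, b, hab, rfl⟩
  have : SwapEquiv G m₀ a ↔ SwapEquiv G m₀ b :=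
    ⟨fun h => h.trans hab, fun h => h.trans hab.symm⟩
  simp [classSum_monomial, this]

lemma mem_beIdeal_of_classSum_eq_zero {p : PolyRing n} (hp : ∀ m₀, classSum G m₀ p = 0) :
    p ∈ beIdeal G := by
  -- subtract from each term of `p` the same term moved to a fixed representative of its class
  let r : Exponent n → Exponent n := fun m =>
    (Quotient.mk (Relation.EqvGen.setoid (SwapStep G)) m).out
  have hr : ∀ m, SwapEquiv G m (r m) := fun m =>
    (Quotient.mk_out (s := Relation.EqvGen.setoid (SwapStep G)) m).symm
  have hr_eq : ∀ m m', r m = r m' ↔ SwapEquiv G m' m := fun m m' =>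
    Quotient.out_inj.trans (Quotient.eq.trans ⟨fun h => h.symm, fun h => h.symm⟩)
  have hsplit : p = ∑ m ∈ p.support, coeff m p • (monomial m 1 - monomial (r m) 1) +
      ∑ m ∈ p.support, monomial (r m) (coeff m p) := by
    rw [← Finset.sum_add_distrib]
    conv_lhs => rw [p.as_sum]
    refine Finset.sum_congr rfl fun m _ => ?_
    rw [smul_sub, smul_monomial, smul_monomial, smul_eq_mul, mul_one, sub_add_cancel]
  have hzero : ∑ m ∈ p.support, monomial (r m) (coeff m p) = 0 := by
    rw [← Finset.sum_image' (f := fun _ : Exponent n => (0 : PolyRing n)) (g := r) _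
      fun c _ => ?_, Finset.sum_const_zero]
    rw [Finset.sum_congr rfl fun m hm => by rw [(Finset.mem_filter.1 hm).2], ← map_sum,
      Finset.filter_congr fun m _ => hr_eq m c, ← classSum_apply, hp c, map_zero]
  rw [hsplit, hzero, add_zero]
  exact sum_mem fun m _ =>
    Submodule.smul_of_tower_mem _ _ (monomial_sub_monomial_mem_beIdeal (hr m))

theorem mem_beIdeal_iff {p : PolyRing n} : p ∈ beIdeal G ↔ ∀ m₀, classSum G m₀ p = 0 :=
  ⟨classSum_eq_zero_of_mem_beIdeal, mem_beIdeal_of_classSum_eq_zero⟩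

lemma exists_swapEquiv_of_mem_beIdeal {p : PolyRing n} (hp : p ∈ beIdeal G) {m : Exponent n}
    (hm : m ∈ p.support) : ∃ m' ∈ p.support, m' ≠ m ∧ SwapEquiv G m m' := by
  by_contra! h
  have hsum := mem_beIdeal_iff.1 hp m
  rw [classSum_apply, Finset.sum_eq_single_of_mem m (Finset.mem_filter.2 ⟨hm, .refl m⟩)
    fun m' hm' hne => absurd (Finset.mem_filter.1 hm').2 (h m' (Finset.mem_filter.1 hm').1 hne)]
    at hsum
  exact mem_support_iff.1 hm hsum

def SupportReachable (G : SimpleGraph (Fin n)) (d : Fin n → ℕ) : Fin n → Fin n → Prop :=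
  Relation.ReflTransGen fun a b => G.Adj a b ∧ d a ≠ 0 ∧ d b ≠ 0

lemma SupportReachable.symm {d : Fin n → ℕ} {a b : Fin n} (h : SupportReachable G d a b) :
    SupportReachable G d b a := by
  induction h with
  | refl => exact .refl
  | tail _ hstep ih => exact .head ⟨hstep.1.symm, hstep.2.2, hstep.2.1⟩ ih

theorem swapEquiv_of_supportReachable {u : Exponent n} {j k : Fin n}
    (h : SupportReachable G (multideg (u + xExp j + yExp k)) j k) :
    SwapEquiv G (u + xExp j + yExp k) (u + xExp k + yExp j) := by
  suffices ∀ d, SupportReachable G d j k → ∀ u, multideg (u + xExp j + yExp k) = d →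
      SwapEquiv G (u + xExp j + yExp k) (u + xExp k + yExp j) from this _ h u rfl
  clear h u
  intro d h
  induction h using Relation.ReflTransGen.head_induction_on with
  | refl => exact fun u _ => .refl _
  | @head j p hjp _ ih =>
    intro u hd
    obtain ⟨hadj, -, hp⟩ := hjp
    by_cases hpk : p = k
    · subst hpk
      exact SwapStep.swapEquiv ⟨j, p, u, hadj, rfl, rfl⟩
    have hu : u (Sum.inl p) + u (Sum.inr p) ≠ 0 := by
      rw [← hd] at hp
      simpa [multideg_apply, xExp, yExp, Finsupp.single_apply, hadj.ne', Ne.symm hpk] using hp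
    by_cases hy : u (Sum.inr p) ≠ 0
    · -- swap along `{j, p}` using a `y`-token at `p`, then route from `p` to `k`
      obtain ⟨u, rfl⟩ : ∃ u', u = u' + yExp p := exists_eq_add_single hy
      have h₁ : SwapEquiv G (u + yExp p + xExp j + yExp k) (u + yExp j + xExp p + yExp k) :=
        SwapStep.swapEquiv ⟨j, p, u + yExp k, hadj, by abel, by abel⟩
      have h₂ := ih (u + yExp j) (by
        rw [← hd]; simp only [map_add, multideg_xExp, multideg_yExp]; abel)
      have : u + yExp j + xExp k + yExp p = u + yExp p + xExp k + yExp j := by abel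
      exact h₁.trans (this ▸ h₂)
    · -- route an `x`-token from `p` to `k`, then swap along `{j, p}`
      obtain ⟨u, rfl⟩ : ∃ u', u = u' + xExp p := exists_eq_add_single (by omega)
      have h₁ := ih (u + xExp j) (by
        rw [← hd]; simp only [map_add, multideg_xExp, multideg_yExp]; abel)
      have h₂ : SwapEquiv G (u + xExp j + xExp k + yExp p) (u + xExp p + xExp k + yExp j) :=
        SwapStep.swapEquiv ⟨j, p, u + xExp k, hadj, by abel, by abel⟩
      have : u + xExp p + xExp j + yExp k = u + xExp j + xExp p + yExp k := by abel
      exact this ▸ h₁.trans h₂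

def xDeg (S : Finset (Fin n)) (m : Exponent n) : ℕ := ∑ k ∈ S, m (Sum.inl k)

lemma xDeg_add (S : Finset (Fin n)) (m m' : Exponent n) :
    xDeg S (m + m') = xDeg S m + xDeg S m' :=
  Finset.sum_add_distrib

@[simp] lemma xDeg_xExp (S : Finset (Fin n)) (j : Fin n) :
    xDeg S (xExp j) = if j ∈ S then 1 else 0 := by
  simp [xDeg, xExp, Finsupp.single_apply]

@[simp] lemma xDeg_yExp (S : Finset (Fin n)) (j : Fin n) : xDeg S (yExp j) = 0 := by
  simp [xDeg, yExp]

lemma xDeg_filter_congr {m : Exponent n} {P Q : Fin n → Prop}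
    (h : ∀ v, multideg m v ≠ 0 → (P v ↔ Q v)) :
    xDeg (Finset.univ.filter P) m = xDeg (Finset.univ.filter Q) m := by
  simp only [xDeg, Finset.sum_filter]
  refine Finset.sum_congr rfl fun v _ => ?_
  by_cases hv : multideg m v = 0
  · simp [show m (Sum.inl v) = 0 by rw [multideg_apply] at hv; omega]
  · simp [h v hv]

noncomputable def supportComponent (G : SimpleGraph (Fin n)) (d : Fin n → ℕ) (j : Fin n) :
    Finset (Fin n) :=
  Finset.univ.filter (SupportReachable G d j)

/-- A complete invariant of swap-equivalence. -/
def XDegEqOnComponents (G : SimpleGraph (Fin n)) (d : Fin n → ℕ) (m m' : Exponent n) : Prop :=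
  multideg m = d ∧ multideg m' = d ∧
    ∀ j, d j ≠ 0 → xDeg (supportComponent G d j) m = xDeg (supportComponent G d j) m'

lemma XDegEqOnComponents.symm {d : Fin n → ℕ} {m m' : Exponent n}
    (h : XDegEqOnComponents G d m m') : XDegEqOnComponents G d m' m :=
  ⟨h.2.1, h.1, fun j hj => (h.2.2 j hj).symm⟩

lemma XDegEqOnComponents.trans {d : Fin n → ℕ} {m m' m'' : Exponent n}
    (h : XDegEqOnComponents G d m m') (h' : XDegEqOnComponents G d m' m'') :
    XDegEqOnComponents G d m m'' :=
  ⟨h.1, h'.2.1, fun j hj => (h.2.2 j hj).trans (h'.2.2 j hj)⟩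

lemma SwapStep.xDegEqOnComponents {m m' : Exponent n} (h : SwapStep G m m') :
    XDegEqOnComponents G (multideg m) m m' := by
  refine ⟨rfl, h.multideg_eq.symm, fun v _ => ?_⟩
  obtain ⟨j, k, u, hadj, rfl, rfl⟩ := h
  have hj : multideg (u + xExp j + yExp k) j ≠ 0 := by simp
  have hk : multideg (u + xExp j + yExp k) k ≠ 0 := by simp
  have hjk : j ∈ supportComponent G (multideg (u + xExp j + yExp k)) v ↔
      k ∈ supportComponent G (multideg (u + xExp j + yExp k)) v := by
    simp only [supportComponent, Finset.mem_filter, Finset.mem_univ, true_and]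
    exact ⟨fun h => h.tail ⟨hadj, hj, hk⟩, fun h => h.tail ⟨hadj.symm, hk, hj⟩⟩
  simp only [xDeg_add, xDeg_xExp, xDeg_yExp, hjk]

lemma SwapEquiv.xDegEqOnComponents {m m' : Exponent n} (h : SwapEquiv G m m') :
    XDegEqOnComponents G (multideg m) m m' := by
  induction h with
  | rel _ _ h => exact h.xDegEqOnComponents
  | refl m => exact ⟨rfl, rfl, fun _ _ => rfl⟩
  | symm _ _ _ ih => exact ih.2.1 ▸ ih.symm
  | trans _ _ _ _ _ ih ih' => exact ih.trans (ih.2.1 ▸ ih')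

lemma eq_of_multideg_eq {m m' : Exponent n} (hd : multideg m = multideg m')
    (hx : ∀ j, m (Sum.inl j) = m' (Sum.inl j)) : m = m' := by
  ext (j | j)
  · exact hx j
  · have := congrFun hd j
    rw [multideg_apply, multideg_apply, hx j] at this
    omega

lemma XDegEqOnComponents.exists_excess_deficit {d : Fin n → ℕ} {m m' : Exponent n}
    (h : XDegEqOnComponents G d m m') (hne : m ≠ m') :
    ∃ a b, SupportReachable G d a b ∧ m' (Sum.inl a) < m (Sum.inl a) ∧
      m (Sum.inl b) < m' (Sum.inl b) := by
  obtain ⟨j, hj⟩ : ∃ j, m (Sum.inl j) ≠ m' (Sum.inl j) := by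
    by_contra! hx
    exact hne (eq_of_multideg_eq (h.1.trans h.2.1.symm) hx)
  wlog hlt : m' (Sum.inl j) < m (Sum.inl j) generalizing m m'
  · obtain ⟨a, b, hab, ha, hb⟩ := this h.symm hne.symm hj.symm (by omega)
    exact ⟨b, a, hab.symm, hb, ha⟩
  have hdj : d j ≠ 0 := by rw [← h.1, multideg_apply]; omega
  by_contra! hb
  have : xDeg (supportComponent G d j) m' < xDeg (supportComponent G d j) m :=
    Finset.sum_lt_sum (fun b hb' => hb j b (by simpa [supportComponent] using hb') hlt)
      ⟨j, by simpa [supportComponent] using .refl, hlt⟩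
  exact this.ne' (h.2.2 j hdj)

def xDist (m m' : Exponent n) : ℕ :=
  ∑ j, ((m (Sum.inl j) - m' (Sum.inl j)) + (m' (Sum.inl j) - m (Sum.inl j)))

lemma xDist_swap_lt {u m' : Exponent n} {a b : Fin n}
    (ha : m' (Sum.inl a) < (u + xExp a + yExp b) (Sum.inl a))
    (hb : (u + xExp a + yExp b) (Sum.inl b) < m' (Sum.inl b)) :
    xDist (u + xExp b + yExp a) m' < xDist (u + xExp a + yExp b) m' := by
  have hx : ∀ c c' v, (u + xExp c + yExp c' : Exponent n) (Sum.inl v) =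
      u (Sum.inl v) + if c = v then 1 else 0 :=
    fun c c' v => by simp [xExp, yExp, Finsupp.single_apply]
  simp only [xDist, hx] at ha hb ⊢
  have hab : a ≠ b := by rintro rfl; simp at ha hb; omega
  simp only [if_pos, if_neg hab, add_zero] at ha hb
  refine Finset.sum_lt_sum (fun v _ => ?_) ⟨a, Finset.mem_univ _, ?_⟩
  · split_ifs <;> subst_vars <;> omega
  · simp only [if_neg hab.symm, ite_true]
    omega

theorem XDegEqOnComponents.swapEquiv {d : Fin n → ℕ} {m m' : Exponent n}
    (h : XDegEqOnComponents G d m m') : SwapEquiv G m m' := by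
  induction hN : xDist m m' using Nat.strong_induction_on generalizing m with
  | _ N ih =>
  by_cases hmm' : m = m'
  · exact hmm' ▸ .refl m
  obtain ⟨a, b, hab, ha, hb⟩ := h.exists_excess_deficit hmm'
  obtain ⟨u, rfl⟩ := exists_eq_add_xExp_add_yExp (m := m) (a := a) (b := b) (by omega) (by
    have := congrFun (h.1.trans h.2.1.symm) b
    rw [multideg_apply, multideg_apply] at this
    omega)
  have hswap := swapEquiv_of_supportReachable (h.1 ▸ hab)
  have h' := hswap.xDegEqOnComponents
  rw [h.1] at h'
  exact hswap.trans (ih _ (hN ▸ xDist_swap_lt ha hb) (h'.symm.trans h) rfl)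

lemma SupportReachable.ne_zero {d : Fin n → ℕ} {a b : Fin n} (h : SupportReachable G d a b)
    (ha : d a ≠ 0) : d b ≠ 0 := by
  cases h with
  | refl => exact ha
  | tail _ hstep => exact hstep.2.2

lemma supportReachable_sup_eq {d : Fin n → ℕ}
    (hH : ∀ a b, H.Adj a b → d a = 0 ∨ d b = 0) :
    SupportReachable (G ⊔ H) d = SupportReachable G d := by
  have : (fun a b => (G ⊔ H).Adj a b ∧ d a ≠ 0 ∧ d b ≠ 0) =
      fun a b => G.Adj a b ∧ d a ≠ 0 ∧ d b ≠ 0 := by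
    ext a b
    simp only [SimpleGraph.sup_adj]
    exact ⟨fun ⟨hadj, ha, hb⟩ =>
      ⟨hadj.resolve_right fun h => (hH a b h).elim ha hb, ha, hb⟩,
      fun ⟨hadj, ha, hb⟩ => ⟨.inl hadj, ha, hb⟩⟩
  simp only [SupportReachable, this]

lemma SwapEquiv.of_sup {m m' : Exponent n} (h : SwapEquiv (G ⊔ H) m m')
    (hH : ∀ a b, H.Adj a b → multideg m a = 0 ∨ multideg m b = 0) : SwapEquiv G m m' := by
  have h' := h.xDegEqOnComponents
  unfold XDegEqOnComponents supportComponent at h'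
  rw [supportReachable_sup_eq hH] at h'
  exact XDegEqOnComponents.swapEquiv h'

/-- The graph `G_i` of the literature; for the cycle it is `C_n^i`. -/
def neighborhoodCompletion (G : SimpleGraph (Fin n)) (i : Fin n) : SimpleGraph (Fin n) :=
  G ⊔ SimpleGraph.fromRel fun a b => G.Adj i a ∧ G.Adj i b

variable {i : Fin n}

lemma SwapStep.add_xExp_of_neighborhoodCompletion {m m' : Exponent n}
    (h : SwapStep (neighborhoodCompletion G i) m m') : SwapEquiv G (m + xExp i) (m' + xExp i) := by
  obtain ⟨j, k, u, hadj, rfl, rfl⟩ := h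
  rcases hadj with hadj | ⟨-, hjk⟩
  · exact SwapStep.swapEquiv ⟨j, k, u + xExp i, hadj, by abel, by abel⟩
  obtain ⟨hj, hk⟩ : G.Adj i j ∧ G.Adj i k := by tauto
  -- `x_j x_i y_k → x_j x_k y_i → x_k x_i y_j`
  have h₁ : SwapEquiv G (u + xExp j + yExp k + xExp i) (u + xExp j + xExp k + yExp i) :=
    SwapStep.swapEquiv ⟨i, k, u + xExp j, hk, by abel, by abel⟩
  have h₂ : SwapEquiv G (u + xExp j + xExp k + yExp i) (u + xExp k + yExp j + xExp i) :=
    SwapStep.swapEquiv ⟨j, i, u + xExp k, hj.symm, by abel, by abel⟩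
  exact h₁.trans h₂

lemma SwapEquiv.add_xExp_of_neighborhoodCompletion {m m' : Exponent n}
    (h : SwapEquiv (neighborhoodCompletion G i) m m') : SwapEquiv G (m + xExp i) (m' + xExp i) := by
  induction h with
  | rel _ _ h => exact h.add_xExp_of_neighborhoodCompletion
  | refl => exact .refl _
  | symm _ _ _ ih => exact ih.symm
  | trans _ _ _ _ _ ih ih' => exact ih.trans ih'

lemma SupportReachable.of_neighborhoodCompletion {d : Fin n → ℕ} {j v : Fin n}
    (h : SupportReachable (neighborhoodCompletion G i) d j v) :
    SupportReachable G (d + Pi.single i 1) j v := by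
  have hd : ∀ w, d w ≠ 0 → (d + Pi.single i 1 : Fin n → ℕ) w ≠ 0 := fun w hw => by
    simp [hw]
  have hi : (d + Pi.single i 1 : Fin n → ℕ) i ≠ 0 := by simp
  induction h with
  | refl => exact .refl
  | tail _ hstep ih =>
    obtain ⟨hadj | ⟨-, hab⟩, ha, hb⟩ := hstep
    · exact ih.tail ⟨hadj, hd _ ha, hd _ hb⟩
    obtain ⟨ha', hb'⟩ := hab.elim id And.symm
    exact (ih.tail ⟨ha'.symm, hd _ ha, hi⟩).tail ⟨hb', hi, hd _ hb⟩

lemma SupportReachable.to_neighborhoodCompletion {d : Fin n → ℕ} {j v : Fin n} (hj : d j ≠ 0)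
    (hv : d v ≠ 0) (h : SupportReachable G (d + Pi.single i 1) j v) :
    SupportReachable (neighborhoodCompletion G i) d j v := by
  set G' := neighborhoodCompletion G i
  -- a passage `a - i - b` through `i` is short-cut by the clique edge `{a, b}`
  have key : ∀ w, SupportReachable G (d + Pi.single i 1) j w → SupportReachable G' d j w ∨
      (w = i ∧ ∃ a, G.Adj i a ∧ SupportReachable G' d j a) := by
    intro w hw
    induction hw with
    | refl => exact .inl .refl
    | @tail w w' _ hstep ih =>
      obtain ⟨hadj, -, hw'⟩ := hstep
      rcases ih with hw | ⟨rfl, a, hia, ha⟩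
      · by_cases hw'i : w' = i
        · exact .inr ⟨hw'i, w, hw'i ▸ hadj.symm, hw⟩
        · refine .inl (hw.tail ⟨.inl hadj, hw.ne_zero hj, ?_⟩)
          simpa [hw'i] using hw'
      · have hw'd : d w' ≠ 0 := by simpa [hadj.ne'] using hw'
        by_cases haw' : a = w'
        · exact .inl (haw' ▸ ha)
        · exact .inl (ha.tail ⟨.inr ⟨haw', .inl ⟨hia, hadj⟩⟩, ha.ne_zero hj, hw'd⟩)
  rcases key v h with hv' | ⟨rfl, a, hia, ha⟩
  · exact hv'
  · exact ha.tail ⟨.inl hia.symm, ha.ne_zero hj, hv⟩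

lemma SwapEquiv.of_add_xExp {m m' : Exponent n} (h : SwapEquiv G (m + xExp i) (m' + xExp i)) :
    SwapEquiv (neighborhoodCompletion G i) m m' := by
  obtain ⟨-, hd, hx⟩ := h.xDegEqOnComponents
  simp only [map_add, multideg_xExp] at hd hx
  have hd' : multideg m' = multideg m := add_right_cancel hd
  refine XDegEqOnComponents.swapEquiv ⟨rfl, hd', fun j hj => ?_⟩
  have hcomp : ∀ p : Exponent n, multideg p = multideg m →
      xDeg (supportComponent (neighborhoodCompletion G i) (multideg m) j) p =
        xDeg (supportComponent G (multideg m + Pi.single i 1) j) p := fun p hp =>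
    xDeg_filter_congr fun v hv =>
      ⟨(·.of_neighborhoodCompletion), (·.to_neighborhoodCompletion hj (hp ▸ hv))⟩
  have := hx j (by simp [hj])
  rw [xDeg_add, xDeg_add, xDeg_xExp, Nat.add_right_cancel_iff] at this
  rw [hcomp m rfl, hcomp m' hd', this]

lemma swapEquiv_add_xExp_iff {m m' : Exponent n} :
    SwapEquiv G (m + xExp i) (m' + xExp i) ↔ SwapEquiv (neighborhoodCompletion G i) m m' :=
  ⟨SwapEquiv.of_add_xExp, SwapEquiv.add_xExp_of_neighborhoodCompletion⟩

theorem colon_span_X_inl_eq (G : SimpleGraph (Fin n)) (i : Fin n) :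
    Submodule.colon (beIdeal G) (Ideal.span {(X (Sum.inl i) : PolyRing n)}) =
      beIdeal (neighborhoodCompletion G i) := by
  refine le_antisymm (fun g hg => ?_) ?_
  · rw [Submodule.mem_colon_span_singleton, smul_eq_mul, mem_beIdeal_iff] at hg
    refine mem_beIdeal_iff.2 fun m₀ => ?_
    rw [← hg (m₀ + xExp i), classSum_apply, classSum_apply, support_mul_X, Finset.filter_map,
      Finset.sum_map]
    refine Finset.sum_congr (Finset.filter_congr fun m _ => swapEquiv_add_xExp_iff.symm)
      fun m _ => (coeff_mul_X m _ g).symm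
  · refine Ideal.span_le.2 ?_
    rintro _ ⟨a, b, hab, rfl⟩
    rw [SetLike.mem_coe, Submodule.mem_colon_span_singleton, smul_eq_mul]
    rcases hab with hab | ⟨-, hab⟩
    · exact Ideal.mul_mem_right _ _ (Ideal.subset_span ⟨a, b, hab, rfl⟩)
    obtain ⟨ha, hb⟩ : G.Adj i a ∧ G.Adj i b := by tauto
    have : fij a b * X (Sum.inl i) = X (Sum.inl a) * fij i b - X (Sum.inl b) * fij i a := by
      simp only [fij]; ring
    rw [this]
    exact sub_mem (Ideal.mul_mem_left _ _ (Ideal.subset_span ⟨i, b, hb, rfl⟩))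
      (Ideal.mul_mem_left _ _ (Ideal.subset_span ⟨i, a, ha, rfl⟩))

lemma isLeadExp_monomial_sub_monomial {m m' : Exponent n} (hne : m' ≠ m) (hlt : lexLt n m' m) :
    IsLeadExp n (monomial m (1 : ℂ) - monomial m' 1) m := by
  have hsupp : (monomial m (1 : ℂ) - monomial m' 1).support ⊆ {m, m'} :=
    (support_sub _ _ _).trans (Finset.union_subset_union support_monomial_subset
      support_monomial_subset)
  refine ⟨by simp [mem_support_iff, coeff_monomial, hne], fun m'' hm'' hne' => ?_⟩
  rcases Finset.mem_insert.1 (hsupp hm'') with rfl | h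
  · exact absurd rfl hne'
  · exact Finset.mem_singleton.1 h ▸ hlt

lemma monomial_mem_inIdeal_of_mem_beIdeal_sup {f : PolyRing n} {m : Exponent n}
    (hf : f ∈ beIdeal (G ⊔ H)) (hm : IsLeadExp n f m)
    (hH : ∀ a b, H.Adj a b → multideg m a = 0 ∨ multideg m b = 0) :
    monomial m 1 ∈ inIdeal (beIdeal G) := by
  obtain ⟨m', hm', hne, hmm'⟩ := exists_swapEquiv_of_mem_beIdeal hf hm.1
  exact Ideal.subset_span ⟨_, monomial_sub_monomial_mem_beIdeal (hmm'.of_sup hH), m,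
    isLeadExp_monomial_sub_monomial hne (hm.2 m' hm' hne), rfl⟩

lemma exists_ne_zero_of_multideg_ne_zero {m : Exponent n} {a : Fin n} (ha : multideg m a ≠ 0) :
    ∃ w, m w ≠ 0 ∧ (w = Sum.inl a ∨ w = Sum.inr a) := by
  by_cases h : m (Sum.inl a) = 0
  · exact ⟨Sum.inr a, by rw [multideg_apply] at ha; omega, .inr rfl⟩
  · exact ⟨Sum.inl a, h, .inl rfl⟩

lemma monomial_mem_mul_of_X_mem {I J : Ideal (PolyRing n)} {m : Exponent n}
    {w w' : Fin n ⊕ Fin n} (hw : w ≠ w') (h : m w ≠ 0) (h' : m w' ≠ 0) (hI : X w ∈ I)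
    (hJ : X w' ∈ J) : monomial m 1 ∈ I * J := by
  refine Ideal.mem_of_dvd _ ?_ (Ideal.mul_mem_mul hI hJ)
  rw [X, X, monomial_mul, one_mul, monomial_dvd_monomial]
  refine ⟨.inr fun v => ?_, one_dvd _⟩
  simp only [Finsupp.add_apply, Finsupp.single_apply]
  split_ifs <;> subst_vars <;> first | omega | exact (hw rfl).elim

lemma monomial_mem_span_mul_span {m : Exponent n} {a b : Fin n} (hab : a ≠ b)
    (ha : multideg m a ≠ 0) (hb : multideg m b ≠ 0) :
    monomial m (1 : ℂ) ∈ Ideal.span {X (Sum.inl a), X (Sum.inr a)} *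
      Ideal.span {X (Sum.inl b), X (Sum.inr b)} := by
  obtain ⟨wa, hwa, rfl | rfl⟩ := exists_ne_zero_of_multideg_ne_zero ha <;>
  obtain ⟨wb, hwb, rfl | rfl⟩ := exists_ne_zero_of_multideg_ne_zero hb <;>
  exact monomial_mem_mul_of_X_mem (by simp [hab]) hwa hwb (Ideal.subset_span (by simp))
    (Ideal.subset_span (by simp))

theorem inIdeal_beIdeal_sup_edge_le {a b : Fin n} (hab : a ≠ b) :
    inIdeal (beIdeal (G ⊔ SimpleGraph.fromRel fun u v => u = a ∧ v = b)) ≤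
      inIdeal (beIdeal G) ⊔
        Ideal.span {X (Sum.inl a), X (Sum.inr a)} * Ideal.span {X (Sum.inl b), X (Sum.inr b)} := by
  refine Ideal.span_le.2 ?_
  rintro _ ⟨f, hf, m, hm, rfl⟩
  by_cases h : multideg m a ≠ 0 ∧ multideg m b ≠ 0
  · exact Submodule.mem_sup_right (monomial_mem_span_mul_span hab h.1 h.2)
  · refine Submodule.mem_sup_left (monomial_mem_inIdeal_of_mem_beIdeal_sup hf hm ?_)
    rintro u v ⟨-, ⟨rfl, rfl⟩ | ⟨rfl, rfl⟩⟩ <;> omega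

section Cycle

variable [NeZero n]

lemma cycG_adj_iff (hn : 2 ≤ n) (i a : Fin n) : (cycG n).Adj i a ↔ a = i + 1 ∨ a = i - 1 := by
  have h1 : (1 : Fin n) ≠ 0 := by simp [Fin.ext_iff, Nat.mod_eq_of_lt (show 1 < n by omega)]
  simp only [cycG, SimpleGraph.fromRel_adj, eq_sub_iff_add_eq, ne_eq]
  constructor
  · rintro ⟨-, h | h⟩
    exacts [.inl h, .inr h.symm]
  · rintro (rfl | h)
    · exact ⟨fun h => h1 (by simpa using h), .inl rfl⟩
    · exact ⟨fun hia => h1 (by subst hia; simpa using h), .inr h.symm⟩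

lemma sub_one_ne_add_one (hn : 3 ≤ n) (i : Fin n) : i - 1 ≠ i + 1 := by
  intro h
  have : (1 + 1 : Fin n) = 0 :=
    calc (1 + 1 : Fin n) = i + 1 - (i - 1) := by abel
      _ = 0 := by rw [h, sub_self]
  simp [Fin.ext_iff, Fin.val_add, Nat.mod_eq_of_lt (show 1 < n by omega),
    Nat.mod_eq_of_lt (show 2 < n by omega)] at this

lemma neighborhoodCompletion_cycG (hn : 3 ≤ n) (i : Fin n) :
    neighborhoodCompletion (cycG n) i =
      cycG n ⊔ SimpleGraph.fromRel fun a b => a = i - 1 ∧ b = i + 1 := by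
  have hne := sub_one_ne_add_one hn i
  unfold neighborhoodCompletion
  congr 1
  ext a b
  simp only [SimpleGraph.fromRel_adj, cycG_adj_iff (by omega : 2 ≤ n)]
  constructor
  · rintro ⟨hab, h⟩
    refine ⟨hab, ?_⟩
    rcases h with ⟨ha | ha, hb | hb⟩ | ⟨hb | hb, ha | ha⟩ <;> subst_vars <;> tauto
  · rintro ⟨hab, ⟨rfl, rfl⟩ | ⟨rfl, rfl⟩⟩ <;> exact ⟨hab, by tauto⟩

end Cycle

end BinomialEdgeIdeal

/-- `(J_{C_n} : x_i) = J_{C_n^i}` and the containment of initial ideals. -/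
theorem stmt9 {n : ℕ} [NeZero n] (hn : 3 ≤ n) (i : Fin n) :
    Submodule.colon (beIdeal (cycG n)) (Ideal.span {(X (Sum.inl i) : PolyRing n)}) =
      beIdeal (cycG n ⊔ SimpleGraph.fromRel (fun a b => a = i - 1 ∧ b = i + 1)) ∧
    inIdeal (Submodule.colon (beIdeal (cycG n)) (Ideal.span {(X (Sum.inl i) : PolyRing n)})) ≤
      inIdeal (beIdeal (cycG n)) ⊔
        Ideal.span {(X (Sum.inl (i - 1)) : PolyRing n), X (Sum.inr (i - 1))} *
          Ideal.span {(X (Sum.inl (i + 1)) : PolyRing n), X (Sum.inr (i + 1))} := by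
  have hcolon := BinomialEdgeIdeal.colon_span_X_inl_eq (cycG n) i
  rw [BinomialEdgeIdeal.neighborhoodCompletion_cycG hn] at hcolon
  exact ⟨hcolon, hcolon ▸ BinomialEdgeIdeal.inIdeal_beIdeal_sup_edge_le
    (BinomialEdgeIdeal.sub_one_ne_add_one hn i)⟩
end
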